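/- arXiv:1808.03126 — 5 statements merged into one kernel-verified Lean document; each statement's English description precedes it below -/
import Mathlib

section
/- In a triangulation of a convex pentagon (5 points in convex position), the two diagonals can have their labels swapped by a sequence of exactly five flips: there is a sequence of five diagonal flips starting and ending at the same unlabeled triangulation such that the induced permutation on the two diagonal labels is the transposition. -/
open scoped Classical

/-- `(a, b)` is a diagonal of the convex `n`-gon with vertices `0, …, n-1`
(pairs of non-adjacent vertices, written with `a < b`). -/
def IsDiag (n a b : ℕ) : Prop :=
  a < b ∧ b < n ∧ a + 2 ≤ b ∧ ¬(a = 0 ∧ b = n - 1)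

/-- Two diagonals (as sorted pairs) of a convex polygon cross, i.e. their
endpoint pairs interleave in the cyclic order. -/
def Cross (p q : ℕ × ℕ) : Prop :=
  (p.1 < q.1 ∧ q.1 < p.2 ∧ p.2 < q.2) ∨ (q.1 < p.1 ∧ p.1 < q.2 ∧ q.2 < p.2)

/-- `T` is a triangulation of the convex `n`-gon: a maximal set of pairwise
non-crossing diagonals. -/
def IsTriangulation (n : ℕ) (T : Finset (ℕ × ℕ)) : Prop :=
  (∀ p ∈ T, IsDiag n p.1 p.2) ∧
  (∀ p ∈ T, ∀ q ∈ T, p ≠ q → ¬ Cross p q) ∧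
  (∀ p : ℕ × ℕ, IsDiag n p.1 p.2 → p ∉ T → ∃ q ∈ T, Cross p q)

/-- `T'` is obtained from `T` by a single flip: one diagonal is removed and
another is inserted, the result being again a triangulation. -/
def Flip (n : ℕ) (T T' : Finset (ℕ × ℕ)) : Prop :=
  IsTriangulation n T ∧ IsTriangulation n T' ∧
  ∃ d d', d ∈ T ∧ d' ∉ T ∧ T' = insert d' (T.erase d)

/-- There is a sequence of exactly `k` flips transforming `T` into `T'`. -/
def FlipSeq (n k : ℕ) (T T' : Finset (ℕ × ℕ)) : Prop :=
  ∃ s : ℕ → Finset (ℕ × ℕ), s 0 = T ∧ s k = T' ∧ ∀ i < k, Flip n (s i) (s (i + 1))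



/-- An edge-labeled triangulation of the convex pentagon: an (unlabeled)
triangulation together with the positions of the two diagonal labels
(labels indexed by `Bool`). -/
structure LT5 where
  /-- the underlying unlabeled triangulation -/
  T : Finset (ℕ × ℕ)
  /-- the diagonal carrying each of the two labels -/
  pos : Bool → ℕ × ℕ
  tri : IsTriangulation 5 T
  mem : ∀ b, pos b ∈ T
  inj : pos true ≠ pos false

/-- A labeled flip: remove a diagonal, insert the other diagonal of the empty
quadrilateral, and transfer the removed diagonal's label to the inserted one. -/
def LFlip (X Y : LT5) : Prop :=
  ∃ d d' : ℕ × ℕ, d ∈ X.T ∧ d' ∉ X.T ∧ Y.T = insert d' (X.T.erase d) ∧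
    ∀ b, Y.pos b = if X.pos b = d then d' else X.pos b

/-- A sequence of exactly `k` labeled flips from `X` to `Y`. -/
def LFlipSeq (k : ℕ) (X Y : LT5) : Prop :=
  ∃ s : ℕ → LT5, s 0 = X ∧ s k = Y ∧ ∀ i < k, LFlip (s i) (s (i + 1))

instance (n a b : ℕ) : Decidable (IsDiag n a b) := by unfold IsDiag; infer_instance
instance (p q : ℕ × ℕ) : Decidable (Cross p q) := by unfold Cross; infer_instance

def D5 : Finset (ℕ × ℕ) := {(0,2),(0,3),(1,3),(1,4),(2,4)}

lemma isDiag_iff (p : ℕ × ℕ) : IsDiag 5 p.1 p.2 ↔ p ∈ D5 := by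
  obtain ⟨a, b⟩ := p
  constructor
  · rintro ⟨h1, h2, h3, h4⟩
    interval_cases b <;> interval_cases a <;> revert h3 h4 <;> decide
  · intro h
    fin_cases h <;> decide

lemma isTri_iff (T : Finset (ℕ × ℕ)) : IsTriangulation 5 T ↔
    ((∀ p ∈ T, p ∈ D5) ∧ (∀ p ∈ T, ∀ q ∈ T, p ≠ q → ¬ Cross p q) ∧
      (∀ p ∈ D5, p ∉ T → ∃ q ∈ T, Cross p q)) := by
  unfold IsTriangulation
  constructor
  · rintro ⟨h1, h2, h3⟩
    exact ⟨fun p hp => (isDiag_iff p).mp (h1 p hp), h2,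
      fun p hp hpt => h3 p ((isDiag_iff p).mpr hp) hpt⟩
  · rintro ⟨h1, h2, h3⟩
    exact ⟨fun p hp => (isDiag_iff p).mpr (h1 p hp), h2,
      fun p hp hpt => h3 p ((isDiag_iff p).mp hp) hpt⟩

lemma classify (T : Finset (ℕ × ℕ)) (h : IsTriangulation 5 T) :
    T = {(0,2),(0,3)} ∨ T = {(0,3),(1,3)} ∨ T = {(1,3),(1,4)} ∨
    T = {(1,4),(2,4)} ∨ T = {(2,4),(0,2)} := by
  rw [isTri_iff] at h
  have hTeq : T = D5.filter (· ∈ T) := by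
    ext p
    simp only [Finset.mem_filter]
    exact ⟨fun hp => ⟨h.1 p hp, hp⟩, fun hp => hp.2⟩
  by_cases h1 : ((0:ℕ),(2:ℕ)) ∈ T <;> by_cases h2 : ((0:ℕ),(3:ℕ)) ∈ T <;>
    by_cases h3 : ((1:ℕ),(3:ℕ)) ∈ T <;> by_cases h4 : ((1:ℕ),(4:ℕ)) ∈ T <;>
    by_cases h5 : ((2:ℕ),(4:ℕ)) ∈ T <;>
    simp only [D5, Finset.filter_insert, Finset.filter_singleton, h1, h2, h3, h4, h5,
      if_true, if_false] at hTeq <;>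
    subst hTeq <;>
    first
      | decide
      | (refine absurd ?_ (h.2.1 (0,2) ?_ (1,3) ?_ ?_) <;> decide)
      | (refine absurd ?_ (h.2.1 (0,2) ?_ (1,4) ?_ ?_) <;> decide)
      | (refine absurd ?_ (h.2.1 (0,3) ?_ (1,4) ?_ ?_) <;> decide)
      | (refine absurd ?_ (h.2.1 (0,3) ?_ (2,4) ?_ ?_) <;> decide)
      | (refine absurd ?_ (h.2.1 (1,3) ?_ (2,4) ?_ ?_) <;> decide)
      | (refine absurd (h.2.2 (0,2) ?_ ?_) ?_ <;> decide)
      | (refine absurd (h.2.2 (0,3) ?_ ?_) ?_ <;> decide)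
      | (refine absurd (h.2.2 (1,3) ?_ ?_) ?_ <;> decide)
      | (refine absurd (h.2.2 (1,4) ?_ ?_) ?_ <;> decide)
      | (refine absurd (h.2.2 (2,4) ?_ ?_) ?_ <;> decide)

lemma lflip_mk (X : LT5) (d d' : ℕ × ℕ) (hd : d ∈ X.T) (hd' : d' ∉ X.T)
    (htri : IsTriangulation 5 (insert d' (X.T.erase d))) :
    ∃ Y : LT5, LFlip X Y ∧ Y.T = insert d' (X.T.erase d) ∧
      ∀ b, Y.pos b = if X.pos b = d then d' else X.pos b := by
  have hmem : ∀ b, (if X.pos b = d then d' else X.pos b) ∈ insert d' (X.T.erase d) := by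
    intro b
    by_cases h : X.pos b = d
    · simp [h]
    · simp only [h, if_false, Finset.mem_insert, Finset.mem_erase]
      exact Or.inr ⟨h, X.mem b⟩
  have hinj : (if X.pos true = d then d' else X.pos true) ≠
      (if X.pos false = d then d' else X.pos false) := by
    by_cases ht : X.pos true = d <;> by_cases hf : X.pos false = d <;>
      simp only [ht, hf, if_true, if_false]
    · exact absurd (ht.trans hf.symm) X.inj
    · exact fun e => hd' (e ▸ X.mem false)
    · exact fun e => hd' (e.symm ▸ X.mem true)
    · exact X.inj
  exact ⟨⟨insert d' (X.T.erase d), fun b => if X.pos b = d then d' else X.pos b,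
    htri, hmem, hinj⟩, ⟨d, d', hd, hd', rfl, fun _ => rfl⟩, rfl, fun _ => rfl⟩

lemma pair_flip {a b c : ℕ × ℕ} (hab : a ≠ b) :
    insert c (({a, b} : Finset (ℕ × ℕ)).erase a) = {b, c} := by
  rw [show ({a, b} : Finset (ℕ × ℕ)) = insert a {b} from rfl,
    Finset.erase_insert (by simp [hab])]
  exact Finset.pair_comm c b

lemma cycle_case (X : LT5) (g0 g1 g2 g3 g4 : ℕ × ℕ)
    (h01 : g0 ≠ g1) (h02 : g0 ≠ g2) (h03 : g0 ≠ g3) (h04 : g0 ≠ g4)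
    (h12 : g1 ≠ g2) (h13 : g1 ≠ g3) (h14 : g1 ≠ g4)
    (h23 : g2 ≠ g3) (h24 : g2 ≠ g4) (h34 : g3 ≠ g4)
    (t1 : IsTriangulation 5 {g1, g2}) (t2 : IsTriangulation 5 {g2, g3})
    (t3 : IsTriangulation 5 {g3, g4}) (t4 : IsTriangulation 5 {g4, g0})
    (t5 : IsTriangulation 5 {g0, g1})
    (hT : X.T = {g0, g1}) :
    ∃ Y : LT5, LFlipSeq 5 X Y ∧ Y.T = X.T ∧ ∀ b, Y.pos b = X.pos (!b) := by
  have hE0 : insert g2 (X.T.erase g0) = {g1, g2} := by rw [hT]; exact pair_flip h01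
  obtain ⟨Y1, f0, hT1, hp0⟩ := lflip_mk X g0 g2 (by rw [hT]; simp)
    (by rw [hT]; simp [h02.symm, h12.symm]) (by rw [hE0]; exact t1)
  have hT1' : Y1.T = {g1, g2} := hT1.trans hE0
  have hE1 : insert g3 (Y1.T.erase g1) = {g2, g3} := by rw [hT1']; exact pair_flip h12
  obtain ⟨Y2, f1, hT2, hp1⟩ := lflip_mk Y1 g1 g3 (by rw [hT1']; simp)
    (by rw [hT1']; simp [h13.symm, h23.symm]) (by rw [hE1]; exact t2)
  have hT2' : Y2.T = {g2, g3} := hT2.trans hE1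
  have hE2 : insert g4 (Y2.T.erase g2) = {g3, g4} := by rw [hT2']; exact pair_flip h23
  obtain ⟨Y3, f2, hT3, hp2⟩ := lflip_mk Y2 g2 g4 (by rw [hT2']; simp)
    (by rw [hT2']; simp [h24.symm, h34.symm]) (by rw [hE2]; exact t3)
  have hT3' : Y3.T = {g3, g4} := hT3.trans hE2
  have hE3 : insert g0 (Y3.T.erase g3) = {g4, g0} := by rw [hT3']; exact pair_flip h34
  obtain ⟨Y4, f3, hT4, hp3⟩ := lflip_mk Y3 g3 g0 (by rw [hT3']; simp)
    (by rw [hT3']; simp [h03, h04]) (by rw [hE3]; exact t4)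
  have hT4' : Y4.T = {g4, g0} := hT4.trans hE3
  have hE4 : insert g1 (Y4.T.erase g4) = {g0, g1} := by rw [hT4']; exact pair_flip h04.symm
  obtain ⟨Y5, f4, hT5, hp4⟩ := lflip_mk Y4 g4 g1 (by rw [hT4']; simp)
    (by rw [hT4']; simp [h14, h01.symm]) (by rw [hE4]; exact t5)
  have hT5' : Y5.T = {g0, g1} := hT5.trans hE4
  refine ⟨Y5, ⟨fun i => match i with
      | 0 => X | 1 => Y1 | 2 => Y2 | 3 => Y3 | 4 => Y4 | _ => Y5,
      rfl, rfl, ?_⟩, hT5'.trans hT.symm, ?_⟩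
  · intro i hi
    interval_cases i
    · exact f0
    · exact f1
    · exact f2
    · exact f3
    · exact f4
  · have ht' : X.pos true = g0 ∨ X.pos true = g1 := by
      have := X.mem true; rw [hT] at this; simpa using this
    have hf' : X.pos false = g0 ∨ X.pos false = g1 := by
      have := X.mem false; rw [hT] at this; simpa using this
    have comp : ∀ b, Y5.pos b = (if X.pos b = g0 then g1 else g0) := by
      intro b
      have hx : X.pos b = g0 ∨ X.pos b = g1 := by
        cases b
        · exact hf'
        · exact ht'
      rcases hx with hx | hx <;>
        rw [hp4, hp3, hp2, hp1, hp0, hx] <;>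
        simp [h01, h02, h03, h04, h12, h13, h14, h23, h24, h34,
          h01.symm, h02.symm, h03.symm, h04.symm, h12.symm, h13.symm, h14.symm,
          h23.symm, h24.symm, h34.symm]
    intro b
    rw [comp b]
    rcases ht' with h | h <;> rcases hf' with h' | h'
    · exact absurd (h.trans h'.symm) X.inj
    · cases b <;> simp [h, h', h01, h01.symm]
    · cases b <;> simp [h, h', h01, h01.symm]
    · exact absurd (h.trans h'.symm) X.inj


/-- In any edge-labeled triangulation of the convex pentagon, the labels of the two
diagonals can be swapped by a sequence of exactly five flips that returns to the same
unlabeled triangulation. -/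
theorem pentagon_label_swap_in_five_flips (X : LT5) :
    ∃ Y : LT5, LFlipSeq 5 X Y ∧ Y.T = X.T ∧ ∀ b, Y.pos b = X.pos (!b) := by
  have ta : IsTriangulation 5 ({(0,2),(0,3)} : Finset (ℕ × ℕ)) := (isTri_iff _).mpr (by decide)
  have tb : IsTriangulation 5 ({(0,3),(1,3)} : Finset (ℕ × ℕ)) := (isTri_iff _).mpr (by decide)
  have tc : IsTriangulation 5 ({(1,3),(1,4)} : Finset (ℕ × ℕ)) := (isTri_iff _).mpr (by decide)
  have td : IsTriangulation 5 ({(1,4),(2,4)} : Finset (ℕ × ℕ)) := (isTri_iff _).mpr (by decide)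
  have te : IsTriangulation 5 ({(2,4),(0,2)} : Finset (ℕ × ℕ)) := (isTri_iff _).mpr (by decide)
  rcases classify X.T X.tri with h | h | h | h | h
  · exact cycle_case X (0,2) (0,3) (1,3) (1,4) (2,4)
      (by decide) (by decide) (by decide) (by decide) (by decide) (by decide)
      (by decide) (by decide) (by decide) (by decide) tb tc td te ta h
  · exact cycle_case X (0,3) (1,3) (1,4) (2,4) (0,2)
      (by decide) (by decide) (by decide) (by decide) (by decide) (by decide)
      (by decide) (by decide) (by decide) (by decide) tc td te ta tb h
  · exact cycle_case X (1,3) (1,4) (2,4) (0,2) (0,3)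
      (by decide) (by decide) (by decide) (by decide) (by decide) (by decide)
      (by decide) (by decide) (by decide) (by decide) td te ta tb tc h
  · exact cycle_case X (1,4) (2,4) (0,2) (0,3) (1,3)
      (by decide) (by decide) (by decide) (by decide) (by decide) (by decide)
      (by decide) (by decide) (by decide) (by decide) te ta tb tc td h
  · exact cycle_case X (2,4) (0,2) (0,3) (1,3) (1,4)
      (by decide) (by decide) (by decide) (by decide) (by decide) (by decide)
      (by decide) (by decide) (by decide) (by decide) ta tb tc td te h
end

section
/- The flip graph of triangulations of a convex polygon with n ≥ 3 vertices is connected: any triangulation can be transformed into any other by a finite sequence of flips. -/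
open scoped Classical

/-!
Every triangulation can be flipped to the fan at vertex `0`, the only triangulation all of whose
diagonals start at `0`. If a diagonal `(c, d)` avoids `0`, let `b` be the first neighbour of `0`
after `c` and `a` the third vertex of the triangle of `T` on `(0, b)`. Then `(a, b)` is a diagonal
avoiding `0`; with the third vertex `m` of its other triangle it spans the quadrilateral
`0, a, m, b`, and flipping `(a, b)` to `(0, m)` lowers the number of diagonals avoiding `0`.
Flips are reversible, so any two triangulations are connected through the fan.
-/

section

variable {n : ℕ} {T : Finset (ℕ × ℕ)}

theorem cross_comm {p q : ℕ × ℕ} : Cross p q ↔ Cross q p := by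
  unfold Cross; omega

def IsEdge (n : ℕ) (T : Finset (ℕ × ℕ)) (p : ℕ × ℕ) : Prop :=
  p ∈ T ∨ p.1 + 1 = p.2 ∨ (p.1 = 0 ∧ p.2 = n - 1)

theorem IsEdge.mem_of_isDiag {p : ℕ × ℕ} (hp : IsEdge n T p)
    (hd : IsDiag n p.1 p.2) : p ∈ T := by
  rcases hp with hp | hp
  · exact hp
  · unfold IsDiag at hd; omega

theorem IsEdge.mem_of_cross {d e : ℕ × ℕ} (he : IsEdge n T e)
    (hd : IsDiag n d.1 d.2) (hde : Cross d e) : e ∈ T := by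
  rcases he with he | he
  · exact he
  · unfold IsDiag Cross at *; omega

def IsFan (T : Finset (ℕ × ℕ)) : Prop := ∀ p ∈ T, p.1 = 0

noncomputable def fanDefect (T : Finset (ℕ × ℕ)) : ℕ := (T.filter fun p => p.1 ≠ 0).card

-- a diagonal crossing `(q, s)` enters the quadrilateral: it is `(p, r)` or leaves through a side
theorem cross_of_cross_quadrilateral {p q r s : ℕ} {d : ℕ × ℕ} (hpq : p < q) (hqr : q < r)
    (hrs : r < s) (hd : Cross d (q, s)) :
    d = (p, r) ∨ Cross d (p, r) ∨ Cross d (p, q) ∨ Cross d (q, r) ∨ Cross d (r, s) ∨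
      Cross d (p, s) := by
  obtain ⟨x, y⟩ := d
  simp only [Cross, Prod.mk.injEq] at *
  lia (splits := 20)

namespace IsTriangulation

theorem not_cross_of_isEdge (hT : IsTriangulation n T) {p q : ℕ × ℕ} (hp : IsEdge n T p)
    (hq : q ∈ T) : ¬Cross p q := by
  have hqd := hT.1 q hq
  rcases hp with hp | hp
  · by_cases hpq : p = q
    · subst hpq; unfold Cross; omega
    · exact hT.2.1 p hp q hq hpq
  · unfold IsDiag Cross at *; omega

theorem exists_apex (hT : IsTriangulation n T) {u v : ℕ} (huv : IsEdge n T (u, v))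
    (huv2 : u + 2 ≤ v) (hv : v < n) :
    ∃ w, u < w ∧ w < v ∧ IsEdge n T (u, w) ∧ IsEdge n T (w, v) := by
  set s := (Finset.Ioo u v).filter fun x => IsEdge n T (u, x)
  have hs : s.Nonempty := ⟨u + 1, by
    simp only [s, Finset.mem_filter, Finset.mem_Ioo]
    exact ⟨by omega, Or.inr (Or.inl rfl)⟩⟩
  have hw_max : ∀ x ∈ s, x ≤ s.max' hs := fun x hx => s.le_max' x hx
  obtain ⟨⟨huw, hwv⟩, huw_edge⟩ :
      (u < s.max' hs ∧ s.max' hs < v) ∧ IsEdge n T (u, s.max' hs) := by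
    simpa only [s, Finset.mem_filter, Finset.mem_Ioo] using s.max'_mem hs
  generalize s.max' hs = w at *
  refine ⟨w, huw, hwv, huw_edge, ?_⟩
  by_contra hwv_edge
  have hwv_succ : w + 1 ≠ v := hwv_edge ∘ Or.inr ∘ Or.inl
  have hd : IsDiag n w v := ⟨hwv, hv, by omega, by omega⟩
  obtain ⟨⟨c, d⟩, hcd, hcross⟩ := hT.2.2 (w, v) hd (hwv_edge ∘ Or.inl)
  have h₁ := hT.not_cross_of_isEdge huv hcd
  have h₂ := hT.not_cross_of_isEdge huw_edge hcd
  -- a diagonal from `u` landing beyond `w` would contradict the maximality of `w`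
  have h₃ : c = u → d < v → w < d → False := by
    rintro rfl hdv hwd
    have := hw_max d (by
      simp only [s, Finset.mem_filter, Finset.mem_Ioo]
      exact ⟨⟨by omega, hdv⟩, Or.inl hcd⟩)
    omega
  simp only [Cross] at *
  lia

-- the sides of the quadrilateral shield `(p, r)` from every diagonal of `T` but `(q, s)`
theorem eq_of_cross_quadrilateral (hT : IsTriangulation n T) {p q r s : ℕ} {t : ℕ × ℕ}
    (hpq : p < q) (hqr : q < r) (hrs : r < s) (e₁ : IsEdge n T (p, q)) (e₂ : IsEdge n T (q, r))
    (e₃ : IsEdge n T (r, s)) (e₄ : IsEdge n T (p, s)) (ht : t ∈ T) (hcross : Cross (p, r) t) :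
    t = (q, s) := by
  have := hT.not_cross_of_isEdge e₁ ht
  have := hT.not_cross_of_isEdge e₂ ht
  have := hT.not_cross_of_isEdge e₃ ht
  have := hT.not_cross_of_isEdge e₄ ht
  obtain ⟨x, y⟩ := t
  simp only [Cross, Prod.mk.injEq] at *
  lia (splits := 20)

theorem flip_of_quadrilateral (hT : IsTriangulation n T) {p q r s : ℕ}
    (hpq : p < q) (hqr : q < r) (hrs : r < s) (e₁ : IsEdge n T (p, q)) (e₂ : IsEdge n T (q, r))
    (e₃ : IsEdge n T (r, s)) (e₄ : IsEdge n T (p, s)) (hqs : (q, s) ∈ T) :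
    Flip n T (insert (p, r) (T.erase (q, s))) := by
  have hpr_diag : IsDiag n p r := by have := hT.1 _ hqs; unfold IsDiag at *; omega
  have hpr_cross : Cross (p, r) (q, s) := by simp only [Cross]; omega
  have hpr_notMem : (p, r) ∉ T := fun h => hT.not_cross_of_isEdge (Or.inl h) hqs hpr_cross
  have hcross_only : ∀ t ∈ T, Cross (p, r) t → t = (q, s) :=
    fun t ht => hT.eq_of_cross_quadrilateral hpq hqr hrs e₁ e₂ e₃ e₄ ht
  have hmem : ∀ t ∈ T, t ≠ (q, s) → t ∈ insert (p, r) (T.erase (q, s)) :=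
    fun t ht hne => Finset.mem_insert_of_mem (Finset.mem_erase.2 ⟨hne, ht⟩)
  refine ⟨hT, ⟨?_, ?_, ?_⟩, (q, s), (p, r), hqs, hpr_notMem, rfl⟩
  · simp only [Finset.mem_insert, Finset.mem_erase]
    rintro t (rfl | ⟨-, ht⟩)
    exacts [hpr_diag, hT.1 t ht]
  · simp only [Finset.mem_insert, Finset.mem_erase]
    rintro t (rfl | ⟨ht_ne, ht⟩) t' (rfl | ⟨ht'_ne, ht'⟩) hne hcross
    · exact hne rfl
    · exact ht'_ne (hcross_only t' ht' hcross)
    · exact ht_ne (hcross_only t ht (cross_comm.1 hcross))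
    · exact hT.2.1 t ht t' ht' hne hcross
  · rintro ⟨x, y⟩ hd hxy
    by_cases hxy_qs : (x, y) = (q, s)
    · exact ⟨(p, r), Finset.mem_insert_self _ _, hxy_qs ▸ cross_comm.1 hpr_cross⟩
    obtain ⟨t, ht, hcross⟩ := hT.2.2 _ hd fun h => hxy (hmem _ h hxy_qs)
    obtain ht_qs | rfl := ne_or_eq t (q, s)
    · exact ⟨t, hmem t ht ht_qs, hcross⟩
    have via_side : ∀ e, IsEdge n T e → Cross (x, y) e → e ≠ (q, s) →
        ∃ t ∈ insert (p, r) (T.erase (q, s)), Cross (x, y) t :=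
      fun e he hc hne => ⟨e, hmem e (he.mem_of_cross hd hc) hne, hc⟩
    rcases cross_of_cross_quadrilateral hpq hqr hrs hcross with h | h | h | h | h | h
    · exact absurd (h ▸ Finset.mem_insert_self _ _) hxy
    · exact ⟨(p, r), Finset.mem_insert_self _ _, h⟩
    · exact via_side _ e₁ h (ne_of_apply_ne Prod.fst hpq.ne)
    · exact via_side _ e₂ h (ne_of_apply_ne Prod.snd hrs.ne)
    · exact via_side _ e₃ h (ne_of_apply_ne Prod.fst hqr.ne')
    · exact via_side _ e₄ h (ne_of_apply_ne Prod.fst hpq.ne)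

theorem exists_flip_fanDefect_lt (hT : IsTriangulation n T) {c d : ℕ} (hcd : (c, d) ∈ T)
    (hc : c ≠ 0) :
    ∃ T', Flip n T T' ∧ fanDefect T' < fanDefect T := by
  obtain ⟨-, hdn, hcd2, -⟩ := hT.1 _ hcd
  dsimp only at hdn hcd2
  -- `b` is the first neighbour of `0` after `c`; the closing side makes `n - 1` a candidate
  set N := (Finset.Ioo c n).filter fun x => IsEdge n T (0, x)
  have hN : N.Nonempty := ⟨n - 1, by
    simp only [N, Finset.mem_filter, Finset.mem_Ioo]
    exact ⟨by omega, Or.inr (Or.inr ⟨rfl, rfl⟩)⟩⟩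
  have hb_min : ∀ x ∈ N, N.min' hN ≤ x := fun x hx => N.min'_le x hx
  obtain ⟨⟨hcb, hbn⟩, h0b⟩ : (c < N.min' hN ∧ N.min' hN < n) ∧ IsEdge n T (0, N.min' hN) := by
    simpa only [N, Finset.mem_filter, Finset.mem_Ioo] using N.min'_mem hN
  generalize N.min' hN = b at *
  have hdb : d ≤ b := by
    have := hT.not_cross_of_isEdge h0b hcd
    simp only [Cross] at this
    omega
  obtain ⟨a, ha0, hab, h0a, hab_edge⟩ := hT.exists_apex h0b (by omega) hbn
  have hac : a ≤ c := by
    by_contra! hca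
    have := hb_min a (by
      simp only [N, Finset.mem_filter, Finset.mem_Ioo]
      exact ⟨⟨hca, by omega⟩, h0a⟩)
    omega
  have habT : (a, b) ∈ T := hab_edge.mem_of_isDiag ⟨hab, hbn, by omega, by omega⟩
  obtain ⟨m, ham, hmb, ham_edge, hmb_edge⟩ := hT.exists_apex hab_edge (by omega) hbn
  refine ⟨_, hT.flip_of_quadrilateral ha0 ham hmb h0a ham_edge hmb_edge h0b habT, ?_⟩
  rw [fanDefect, fanDefect, Finset.filter_insert, if_neg (by simp), Finset.filter_erase]
  exact Finset.card_erase_lt_of_mem (Finset.mem_filter.2 ⟨habT, by omega⟩)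

theorem exists_reflTransGen_isFan (hT : IsTriangulation n T) :
    ∃ T₀, Relation.ReflTransGen (Flip n) T T₀ ∧ IsTriangulation n T₀ ∧ IsFan T₀ := by
  induction hk : fanDefect T using Nat.strong_induction_on generalizing T with
  | _ k ih =>
    by_cases hfan : IsFan T
    · exact ⟨T, .refl, hT, hfan⟩
    simp only [IsFan, not_forall] at hfan
    obtain ⟨⟨c, d⟩, hcd, hc⟩ := hfan
    obtain ⟨T', hflip, hlt⟩ := hT.exists_flip_fanDefect_lt hcd hc
    obtain ⟨T₀, hT'T₀, hT₀, hfan₀⟩ := ih _ (hk ▸ hlt) hflip.2.1 rfl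
    exact ⟨T₀, .head hflip hT'T₀, hT₀, hfan₀⟩

theorem subset_of_isFan {T' : Finset (ℕ × ℕ)} (hT : IsTriangulation n T)
    (hT' : IsTriangulation n T') (hfan : IsFan T) (hfan' : IsFan T') : T ⊆ T' := by
  intro p hp
  by_contra hp₂
  obtain ⟨q, hq, hcross⟩ := hT'.2.2 p (hT.1 p hp) hp₂
  have := hfan p hp
  have := hfan' q hq
  unfold Cross at hcross
  omega

end IsTriangulation

theorem Flip.symm {T' : Finset (ℕ × ℕ)} (h : Flip n T T') : Flip n T' T := by
  obtain ⟨hT, hT', d, d', hd, hd', rfl⟩ := h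
  have hd'_erase : d' ∉ T.erase d := fun h => hd' (Finset.mem_of_mem_erase h)
  refine ⟨hT', hT, d', d, Finset.mem_insert_self _ _, ?_, ?_⟩
  · exact fun h => (Finset.mem_insert.1 h).elim (fun h => hd' (h ▸ hd)) (Finset.notMem_erase d T)
  · rw [Finset.erase_insert hd'_erase, Finset.insert_erase hd]

instance : Std.Symm (Flip n) := ⟨fun _ _ => Flip.symm⟩

end

theorem flipGraph_connected_general (n : ℕ) (T₁ T₂ : Finset (ℕ × ℕ))
    (h₁ : IsTriangulation n T₁) (h₂ : IsTriangulation n T₂) :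
    Relation.ReflTransGen (Flip n) T₁ T₂ := by
  obtain ⟨F₁, hT₁F₁, hF₁, hfan₁⟩ := h₁.exists_reflTransGen_isFan
  obtain ⟨F₂, hT₂F₂, hF₂, hfan₂⟩ := h₂.exists_reflTransGen_isFan
  have hF : F₁ = F₂ :=
    (hF₁.subset_of_isFan hF₂ hfan₁ hfan₂).antisymm (hF₂.subset_of_isFan hF₁ hfan₂ hfan₁)
  exact hT₁F₁.trans (hF ▸ symm hT₂F₂)

/-- The flip graph of triangulations of a convex polygon with `n ≥ 3` vertices is
connected: any triangulation can be transformed into any other by finitely many flips. -/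
theorem flipGraph_connected (n : ℕ) (hn : 3 ≤ n) (T₁ T₂ : Finset (ℕ × ℕ))
    (h₁ : IsTriangulation n T₁) (h₂ : IsTriangulation n T₂) :
    Relation.ReflTransGen (Flip n) T₁ T₂ :=
  flipGraph_connected_general n T₁ T₂ h₁ h₂
end

section
/- For a convex polygon with n ≥ 3 vertices, any two triangulations can be connected by a sequence of at most 2n−6 flips (e.g., via flipping all diagonals to be incident to a fixed vertex). -/
open scoped Classical

/-! ### Auxiliary lemmas -/

lemma cross_symm {p q : ℕ × ℕ} (h : Cross p q) : Cross q p := by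
  rcases h with h | h
  · exact Or.inr h
  · exact Or.inl h

/-- Counting bound for non-crossing families inside an interval. -/
lemma count_bound : ∀ M : ℕ, ∀ T : Finset (ℕ × ℕ),
    (∀ p ∈ T, p.1 + 2 ≤ p.2) →
    (∀ p ∈ T, ∀ q ∈ T, p ≠ q → ¬ Cross p q) →
    ∀ a b : ℕ, a < b → b - a + (T.filter (fun p => a ≤ p.1 ∧ p.2 ≤ b)).card ≤ M →
      (((a, b) ∉ T → a + 2 ≤ b → (T.filter (fun p => a ≤ p.1 ∧ p.2 ≤ b)).card + 2 ≤ b - a)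
      ∧ (T.filter (fun p => a ≤ p.1 ∧ p.2 ≤ b)).card + 1 ≤ b - a) := by
  intro M
  induction M using Nat.strong_induction_on with
  | _ M IH =>
    intro T h2 hcr a b hab hM
    have hBpart : (a, b) ∉ T → a + 2 ≤ b →
        (T.filter (fun p => a ≤ p.1 ∧ p.2 ≤ b)).card + 2 ≤ b - a := by
      intro hnab hab2
      set P := T.filter (fun p => a ≤ p.1 ∧ p.2 ≤ b) with hPdef
      rcases P.eq_empty_or_nonempty with he | hne
      · rw [he]; simp; omega
      · obtain ⟨p₀, hp₀, hmin⟩ := P.exists_min_image Prod.fst hne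
        have hp₀T : p₀ ∈ T := (Finset.mem_filter.mp hp₀).1
        have hp₀r := (Finset.mem_filter.mp hp₀).2
        by_cases hx₀ : a < p₀.1
        · -- all elements have fst ≥ p₀.1 > a : shrink interval
          have hPeq : P = T.filter (fun p => p₀.1 ≤ p.1 ∧ p.2 ≤ b) := by
            ext p
            simp only [hPdef, Finset.mem_filter]
            constructor
            · intro ⟨hpT, hpr⟩
              exact ⟨hpT, hmin p (Finset.mem_filter.mpr ⟨hpT, hpr⟩), hpr.2⟩
            · intro ⟨hpT, hpr⟩
              exact ⟨hpT, by omega, hpr.2⟩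
          have hx₀b : p₀.1 < b := by
            have := h2 p₀ hp₀T; omega
          have hlt : (b - p₀.1) + (T.filter (fun p => p₀.1 ≤ p.1 ∧ p.2 ≤ b)).card < M := by
            rw [← hPeq]; omega
          have := (IH _ hlt T h2 hcr p₀.1 b hx₀b le_rfl).2
          rw [hPeq]; omega
        · -- p₀.1 = a ; take maximal snd among fst = a
          have hx₀a : p₀.1 = a := by omega
          obtain ⟨p₁, hp₁, hmax⟩ := (P.filter (fun p => p.1 = a)).exists_max_image Prod.snd
            ⟨p₀, Finset.mem_filter.mpr ⟨hp₀, hx₀a⟩⟩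
          have hp₁P : p₁ ∈ P := (Finset.mem_filter.mp hp₁).1
          have hp₁a : p₁.1 = a := (Finset.mem_filter.mp hp₁).2
          have hp₁T : p₁ ∈ T := (Finset.mem_filter.mp hp₁P).1
          set y₀ := p₁.2 with hy₀def
          have hp₁eq : p₁ = (a, y₀) := Prod.ext_iff.mpr ⟨hp₁a, rfl⟩
          have hy₀b : y₀ ≤ b := (Finset.mem_filter.mp hp₁P).2.2
          have hay₀ : a + 2 ≤ y₀ := by have := h2 p₁ hp₁T; omega
          have hy₀lt : y₀ < b := by
            rcases eq_or_lt_of_le hy₀b with he | hl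
            · exfalso; apply hnab; rw [← he, ← hp₁eq]; exact hp₁T
            · exact hl
          -- split P into [a,y₀] and [y₀,b]
          have hsubset : P ⊆ T.filter (fun p => a ≤ p.1 ∧ p.2 ≤ y₀) ∪
              T.filter (fun p => y₀ ≤ p.1 ∧ p.2 ≤ b) := by
            intro p hp
            have hpT : p ∈ T := (Finset.mem_filter.mp hp).1
            have hpr := (Finset.mem_filter.mp hp).2
            rcases eq_or_lt_of_le hpr.1 with hfa | hfa
            · -- p.1 = a
              have : p.2 ≤ y₀ := hmax p (Finset.mem_filter.mpr ⟨hp, hfa.symm⟩)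
              exact Finset.mem_union_left _ (Finset.mem_filter.mpr ⟨hpT, hpr.1, this⟩)
            · -- a < p.1 : use noncrossing with (a,y₀)
              have hne' : p ≠ p₁ := by
                intro h; rw [h, hp₁a] at hfa; omega
              have hnc := hcr p hpT p₁ hp₁T hne'
              have : p.2 ≤ y₀ ∨ y₀ ≤ p.1 := by
                by_contra hcon
                push_neg at hcon
                exact hnc (cross_symm (Or.inl (by rw [hp₁eq]; exact ⟨hfa, hcon.2, hcon.1⟩)))
              rcases this with h | h
              · exact Finset.mem_union_left _ (Finset.mem_filter.mpr ⟨hpT, hpr.1, h⟩)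
              · exact Finset.mem_union_right _ (Finset.mem_filter.mpr ⟨hpT, h, hpr.2⟩)
          have hc1 : (T.filter (fun p => a ≤ p.1 ∧ p.2 ≤ y₀)).card ≤ P.card := by
            apply Finset.card_le_card
            intro p hp
            have := Finset.mem_filter.mp hp
            exact Finset.mem_filter.mpr ⟨this.1, this.2.1, by omega⟩
          have hc2 : (T.filter (fun p => y₀ ≤ p.1 ∧ p.2 ≤ b)).card ≤ P.card := by
            apply Finset.card_le_card
            intro p hp
            have := Finset.mem_filter.mp hp
            exact Finset.mem_filter.mpr ⟨this.1, by omega, this.2.2⟩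
          have hb1 := (IH ((y₀ - a) + (T.filter (fun p => a ≤ p.1 ∧ p.2 ≤ y₀)).card)
            (by omega) T h2 hcr a y₀ (by omega) le_rfl).2
          have hb2 := (IH ((b - y₀) + (T.filter (fun p => y₀ ≤ p.1 ∧ p.2 ≤ b)).card)
            (by omega) T h2 hcr y₀ b (by omega) le_rfl).2
          have hcard : P.card ≤ (T.filter (fun p => a ≤ p.1 ∧ p.2 ≤ y₀)).card +
              (T.filter (fun p => y₀ ≤ p.1 ∧ p.2 ≤ b)).card :=
            le_trans (Finset.card_le_card hsubset) (Finset.card_union_le _ _)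
          omega
    refine ⟨hBpart, ?_⟩
    by_cases hmem : (a, b) ∈ T
    · -- erase (a,b) and apply B to the smaller family
      have hab2 : a + 2 ≤ b := h2 _ hmem
      have h2' : ∀ p ∈ T.erase (a, b), p.1 + 2 ≤ p.2 :=
        fun p hp => h2 p (Finset.mem_of_mem_erase hp)
      have hcr' : ∀ p ∈ T.erase (a, b), ∀ q ∈ T.erase (a, b), p ≠ q → ¬ Cross p q :=
        fun p hp q hq => hcr p (Finset.mem_of_mem_erase hp) q (Finset.mem_of_mem_erase hq)
      have hfe : (T.erase (a, b)).filter (fun p => a ≤ p.1 ∧ p.2 ≤ b) =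
          (T.filter (fun p => a ≤ p.1 ∧ p.2 ≤ b)).erase (a, b) := by
        ext p
        simp only [Finset.mem_filter, Finset.mem_erase]
        tauto
      have hmemP : (a, b) ∈ T.filter (fun p => a ≤ p.1 ∧ p.2 ≤ b) :=
        Finset.mem_filter.mpr ⟨hmem, le_rfl, le_rfl⟩
      have hcP : 1 ≤ (T.filter (fun p => a ≤ p.1 ∧ p.2 ≤ b)).card :=
        Finset.card_pos.mpr ⟨_, hmemP⟩
      have hce : ((T.erase (a, b)).filter (fun p => a ≤ p.1 ∧ p.2 ≤ b)).card =
          (T.filter (fun p => a ≤ p.1 ∧ p.2 ≤ b)).card - 1 := by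
        rw [hfe, Finset.card_erase_of_mem hmemP]
      have := (IH ((b - a) + ((T.erase (a, b)).filter (fun p => a ≤ p.1 ∧ p.2 ≤ b)).card)
        (by omega) (T.erase (a, b)) h2' hcr' a b hab (le_rfl)).1
        (Finset.notMem_erase _ _) hab2
      omega
    · by_cases hab2 : a + 2 ≤ b
      · have := hBpart hmem hab2; omega
      · -- b = a + 1 : no pairs fit
        have : T.filter (fun p => a ≤ p.1 ∧ p.2 ≤ b) = ∅ := by
          rw [Finset.filter_eq_empty_iff]
          intro p hp
          have := h2 p hp
          omega
        rw [this]; simp; omega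

lemma tri_card_le (n : ℕ) (hn : 3 ≤ n) (T : Finset (ℕ × ℕ)) (hT : IsTriangulation n T) :
    T.card + 3 ≤ n := by
  have h2 : ∀ p ∈ T, p.1 + 2 ≤ p.2 := fun p hp => (hT.1 p hp).2.2.1
  have hfull : T.filter (fun p => 0 ≤ p.1 ∧ p.2 ≤ n - 1) = T := by
    apply Finset.filter_true_of_mem
    intro p hp
    have := (hT.1 p hp).2.1
    omega
  have h0 : (0, n - 1) ∉ T := fun h => (hT.1 _ h).2.2.2 ⟨rfl, rfl⟩
  have := (count_bound ((n - 1 - 0) + (T.filter (fun p => 0 ≤ p.1 ∧ p.2 ≤ n - 1)).card)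
    T h2 hT.2.1 0 (n - 1) (by omega) le_rfl).1 h0 (by omega)
  rw [hfull] at this
  omega

/-- The key flip construction: given the quadrilateral `0, a, c, b` around
diagonal `(a,b)`, flipping gives a triangulation again. -/
lemma flip_core (n a b c : ℕ) (T : Finset (ℕ × ℕ)) (hT : IsTriangulation n T)
    (hd : (a, b) ∈ T) (ha : 1 ≤ a) (hac : a < c) (hcb : c < b)
    (H2 : (0, a) ∈ T ∨ a = 1) (H3 : (0, b) ∈ T ∨ b = n - 1)
    (H4 : (a, c) ∈ T ∨ c = a + 1) (H5 : (c, b) ∈ T ∨ b = c + 1) :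
    Flip n T (insert (0, c) (T.erase (a, b))) ∧ (0, c) ∉ T := by
  obtain ⟨hdiag, hnc, hmax⟩ := hT
  have hab := hdiag _ hd
  simp only [IsDiag] at hab
  have hbn : b < n := hab.2.1
  have habn : ¬(a = 0 ∧ b = n - 1) := hab.2.2.2
  have hcd : IsDiag n 0 c := ⟨by omega, by omega, by omega, by omega⟩
  have hcross_dd : Cross (0, c) (a, b) := Or.inl ⟨by omega, by omega, by omega⟩
  have hnotmem : (0, c) ∉ T := by
    intro h
    exact hnc _ h _ hd (by simp [Prod.ext_iff]; omega) hcross_dd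
  -- the only diagonal of T crossing (0,c) is (a,b)
  have honly : ∀ q ∈ T, Cross (0, c) q → q = (a, b) := by
    rintro ⟨x, y⟩ hq hcross
    have hqd := hdiag _ hq
    simp only [IsDiag] at hqd
    rcases hcross with ⟨h1, h2', h3⟩ | ⟨h1, h2', h3⟩
    swap
    · simp only at h1; omega
    simp only at h1 h2' h3
    -- 0 < x, x < c, c < y
    have hxa : a ≤ x := by
      by_contra hcon
      push_neg at hcon
      have hA : (0, a) ∈ T := by
        rcases H2 with h | h
        · exact h
        · omega
      exact hnc _ hq _ hA (by simp [Prod.ext_iff]; omega)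
        (Or.inr ⟨by omega, by omega, by omega⟩)
    rcases eq_or_lt_of_le hxa with hxa | hxa
    · -- x = a ; show y = b
      have hyb : y = b := by
        rcases Nat.lt_trichotomy y b with h | h | h
        · have hB : (c, b) ∈ T := by
            rcases H5 with hh | hh
            · exact hh
            · omega
          exact absurd (Or.inl ⟨by omega, by omega, by omega⟩ : Cross (x, y) (c, b))
            (hnc _ hq _ hB (by simp [Prod.ext_iff]; omega))
        · exact h
        · have hB : (0, b) ∈ T := by
            rcases H3 with hh | hh
            · exact hh
            · exfalso; omega
          exact absurd (Or.inr ⟨by omega, by omega, by omega⟩ : Cross (x, y) (0, b))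
            (hnc _ hq _ hB (by simp [Prod.ext_iff]; omega))
      simp [Prod.ext_iff]; omega
    · -- a < x < c : crosses (a,c)
      exfalso
      have hA : (a, c) ∈ T := by
        rcases H4 with h | h
        · exact h
        · omega
      exact hnc _ hq _ hA (by simp [Prod.ext_iff]; omega)
        (Or.inr ⟨by omega, by omega, by omega⟩)
  have hT' : IsTriangulation n (insert (0, c) (T.erase (a, b))) := by
    refine ⟨?_, ?_, ?_⟩
    · intro p hp
      rcases Finset.mem_insert.mp hp with rfl | hp
      · exact hcd
      · exact hdiag _ (Finset.mem_of_mem_erase hp)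
    · intro p hp q hq hne
      rcases Finset.mem_insert.mp hp with rfl | hp <;>
        rcases Finset.mem_insert.mp hq with h' | hq
      · exact absurd h'.symm hne
      · intro hc
        exact (Finset.ne_of_mem_erase hq) (honly q (Finset.mem_of_mem_erase hq) hc)
      · intro hc
        subst h'
        exact (Finset.ne_of_mem_erase hp) (honly p (Finset.mem_of_mem_erase hp) (cross_symm hc))
      · exact hnc _ (Finset.mem_of_mem_erase hp) _ (Finset.mem_of_mem_erase hq) hne
    · intro p hdp hpnot
      by_cases hpT : p ∈ T
      · have hpd : p = (a, b) := by
          by_contra hne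
          exact hpnot (Finset.mem_insert_of_mem (Finset.mem_erase.mpr ⟨hne, hpT⟩))
        exact ⟨(0, c), Finset.mem_insert_self _ _, by rw [hpd]; exact cross_symm hcross_dd⟩
      · obtain ⟨q, hq, hcq⟩ := hmax p hdp hpT
        by_cases hqd : q = (a, b)
        · subst hqd
          obtain ⟨u, v⟩ := p
          simp only [IsDiag] at hdp
          rcases hcq with ⟨h1, h2', h3⟩ | ⟨h1, h2', h3⟩ <;> simp only at h1 h2' h3
          · -- u < a, a < v, v < b
            by_cases hu : u = 0
            · subst hu
              rcases Nat.lt_trichotomy v c with hv | hv | hv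
              · have h4 : (a, c) ∈ T := by
                  rcases H4 with h | h
                  · exact h
                  · exfalso; omega
                exact ⟨(a, c), Finset.mem_insert_of_mem (Finset.mem_erase.mpr
                  ⟨by simp [Prod.ext_iff]; omega, h4⟩),
                  Or.inl ⟨by omega, by omega, by omega⟩⟩
              · exfalso
                apply hpnot
                rw [show ((0 : ℕ), v) = (0, c) by rw [hv]]
                exact Finset.mem_insert_self _ _
              · have h5 : (c, b) ∈ T := by
                  rcases H5 with h | h
                  · exact h
                  · exfalso; omega
                exact ⟨(c, b), Finset.mem_insert_of_mem (Finset.mem_erase.mpr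
                  ⟨by simp [Prod.ext_iff]; omega, h5⟩),
                  Or.inl ⟨by omega, by omega, by omega⟩⟩
            · have h2m : (0, a) ∈ T := by
                rcases H2 with h | h
                · exact h
                · exfalso; omega
              exact ⟨(0, a), Finset.mem_insert_of_mem (Finset.mem_erase.mpr
                ⟨by simp [Prod.ext_iff]; omega, h2m⟩),
                Or.inr ⟨by omega, by omega, by omega⟩⟩
          · -- a < u, u < b, b < v
            have hvn : v < n := hdp.2.1
            have h3m : (0, b) ∈ T := by
              rcases H3 with h | h
              · exact h
              · exfalso; omega
            exact ⟨(0, b), Finset.mem_insert_of_mem (Finset.mem_erase.mpr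
              ⟨by simp [Prod.ext_iff]; omega, h3m⟩),
              Or.inr ⟨by omega, by omega, by omega⟩⟩
        · exact ⟨q, Finset.mem_insert_of_mem (Finset.mem_erase.mpr ⟨hqd, hq⟩), hcq⟩
  exact ⟨⟨⟨hdiag, hnc, hmax⟩, hT', (a, b), (0, c), hd, hnotmem, rfl⟩, hnotmem⟩

/-- In a non-fan triangulation, find the flippable configuration. -/
lemma find_config (n : ℕ) (T : Finset (ℕ × ℕ)) (hT : IsTriangulation n T)
    (hne : (T.filter (fun p => p.1 ≠ 0)).Nonempty) :
    ∃ a b c, (a, b) ∈ T ∧ 1 ≤ a ∧ a < c ∧ c < b ∧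
      ((0, a) ∈ T ∨ a = 1) ∧ ((0, b) ∈ T ∨ b = n - 1) ∧
      ((a, c) ∈ T ∨ c = a + 1) ∧ ((c, b) ∈ T ∨ b = c + 1) := by
  obtain ⟨hdiag, hnc, hmax⟩ := hT
  obtain ⟨p₀, hp₀, hmaxlen⟩ := (T.filter (fun p => p.1 ≠ 0)).exists_max_image
    (fun p => p.2 - p.1) hne
  obtain ⟨a, b⟩ := p₀
  simp only [Finset.mem_filter] at hp₀
  have hdT : (a, b) ∈ T := hp₀.1
  have ha : 1 ≤ a := by
    have := hp₀.2; omega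
  have hab := hdiag _ hdT
  simp only [IsDiag] at hab
  have hlen : ∀ x y, (x, y) ∈ T → x ≠ 0 → y - x ≤ b - a := by
    intro x y h hx
    exact hmaxlen (x, y) (Finset.mem_filter.mpr ⟨h, hx⟩)
  have H2 : (0, a) ∈ T ∨ a = 1 := by
    by_contra hcon
    push_neg at hcon
    obtain ⟨hna, ha1⟩ := hcon
    have hd0a : IsDiag n 0 a := ⟨by omega, by omega, by omega, by omega⟩
    obtain ⟨q, hq, hcq⟩ := hmax (0, a) hd0a hna
    obtain ⟨x, y⟩ := q
    have hqd := hdiag _ hq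
    simp only [IsDiag] at hqd
    rcases hcq with ⟨h1, h2, h3⟩ | ⟨h1, h2, h3⟩ <;> simp only at h1 h2 h3
    · -- 0 < x, x < a, a < y
      have hyb : b ≤ y := by
        by_contra h
        exact hnc _ hq _ hdT (by simp [Prod.ext_iff]; omega)
          (Or.inl ⟨by omega, by omega, by omega⟩)
      have := hlen x y hq (by omega)
      omega
    · omega
  have H3 : (0, b) ∈ T ∨ b = n - 1 := by
    by_contra hcon
    push_neg at hcon
    obtain ⟨hnb, hb1⟩ := hcon
    have hd0b : IsDiag n 0 b := ⟨by omega, by omega, by omega, by omega⟩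
    obtain ⟨q, hq, hcq⟩ := hmax (0, b) hd0b hnb
    obtain ⟨x, y⟩ := q
    have hqd := hdiag _ hq
    simp only [IsDiag] at hqd
    rcases hcq with ⟨h1, h2, h3⟩ | ⟨h1, h2, h3⟩ <;> simp only at h1 h2 h3
    · -- 0 < x, x < b, b < y
      have hxa : x ≤ a := by
        by_contra h
        exact hnc _ hq _ hdT (by simp [Prod.ext_iff]; omega)
          (Or.inr ⟨by omega, by omega, by omega⟩)
      have := hlen x y hq (by omega)
      omega
    · omega
  by_cases hA1 : (T.filter (fun p => p.1 = a ∧ p.2 < b)).Nonempty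
  · obtain ⟨p₁, hp₁, hmax1⟩ := (T.filter (fun p => p.1 = a ∧ p.2 < b)).exists_max_image
      (fun p => p.2) hA1
    obtain ⟨a', c⟩ := p₁
    simp only [Finset.mem_filter] at hp₁
    have ha' : a' = a := hp₁.2.1
    subst ha'
    have hacT : (a', c) ∈ T := hp₁.1
    have hcb : c < b := hp₁.2.2
    have hcdiag := hdiag _ hacT
    simp only [IsDiag] at hcdiag
    have hmaxc : ∀ y, (a', y) ∈ T → y < b → y ≤ c := by
      intro y h hy
      exact hmax1 (a', y) (Finset.mem_filter.mpr ⟨h, rfl, hy⟩)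
    refine ⟨a', b, c, hdT, ha, by omega, hcb, H2, H3, Or.inl hacT, ?_⟩
    by_cases hb : b = c + 1
    · exact Or.inr hb
    · left
      by_contra hcbT
      have hdcb : IsDiag n c b := ⟨by omega, by omega, by omega, by omega⟩
      obtain ⟨q, hq, hcq⟩ := hmax (c, b) hdcb hcbT
      obtain ⟨x, y⟩ := q
      have hqd := hdiag _ hq
      simp only [IsDiag] at hqd
      rcases hcq with ⟨h1, h2, h3⟩ | ⟨h1, h2, h3⟩ <;> simp only at h1 h2 h3
      · -- c < x, x < b, b < y : crosses (a,b)
        exact hnc _ hq _ hdT (by simp [Prod.ext_iff]; omega)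
          (Or.inr ⟨by omega, by omega, by omega⟩)
      · -- x < c, c < y, y < b
        rcases Nat.lt_trichotomy x a' with hx | hx | hx
        · exact hnc _ hq _ hdT (by simp [Prod.ext_iff]; omega)
            (Or.inl ⟨by omega, by omega, by omega⟩)
        · subst hx
          exact absurd (hmaxc y hq (by omega)) (by omega)
        · exact hnc _ hq _ hacT (by simp [Prod.ext_iff]; omega)
            (Or.inr ⟨by omega, by omega, by omega⟩)
  · have hnoA1 : ∀ y, (a, y) ∈ T → y < b → False := by
      intro y h hy
      exact hA1 ⟨(a, y), Finset.mem_filter.mpr ⟨h, rfl, hy⟩⟩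
    by_cases hA2 : (T.filter (fun p => p.2 = b ∧ a < p.1)).Nonempty
    · obtain ⟨p₁, hp₁, hmin1⟩ := (T.filter (fun p => p.2 = b ∧ a < p.1)).exists_min_image
        (fun p => p.1) hA2
      obtain ⟨c, b'⟩ := p₁
      simp only [Finset.mem_filter] at hp₁
      have hb' : b' = b := hp₁.2.1
      subst hb'
      have hcbT : (c, b') ∈ T := hp₁.1
      have hac : a < c := hp₁.2.2
      have hcdiag := hdiag _ hcbT
      simp only [IsDiag] at hcdiag
      have hminc : ∀ x, (x, b') ∈ T → a < x → c ≤ x := by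
        intro x h hx
        exact hmin1 (x, b') (Finset.mem_filter.mpr ⟨h, rfl, hx⟩)
      refine ⟨a, b', c, hdT, ha, hac, by omega, H2, H3, ?_, Or.inl hcbT⟩
      by_cases hc : c = a + 1
      · exact Or.inr hc
      · left
        by_contra hacT
        have hdac : IsDiag n a c := ⟨by omega, by omega, by omega, by omega⟩
        obtain ⟨q, hq, hcq⟩ := hmax (a, c) hdac hacT
        obtain ⟨x, y⟩ := q
        have hqd := hdiag _ hq
        simp only [IsDiag] at hqd
        rcases hcq with ⟨h1, h2, h3⟩ | ⟨h1, h2, h3⟩ <;> simp only at h1 h2 h3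
        · -- a < x, x < c, c < y
          rcases Nat.lt_trichotomy y b' with hy | hy | hy
          · exact hnc _ hq _ hcbT (by simp [Prod.ext_iff]; omega)
              (Or.inl ⟨by omega, by omega, by omega⟩)
          · subst hy
            exact absurd (hminc x hq (by omega)) (by omega)
          · exact hnc _ hq _ hdT (by simp [Prod.ext_iff]; omega)
              (Or.inr ⟨by omega, by omega, by omega⟩)
        · -- x < a, a < y, y < c : crosses (a,b)
          exact hnc _ hq _ hdT (by simp [Prod.ext_iff]; omega)
            (Or.inl ⟨by omega, by omega, by omega⟩)
    · have hnoA2 : ∀ x, (x, b) ∈ T → a < x → False := by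
        intro x h hx
        exact hA2 ⟨(x, b), Finset.mem_filter.mpr ⟨h, rfl, hx⟩⟩
      have hb2 : b = a + 2 := by
        by_contra hb
        have hb3 : a + 3 ≤ b := by omega
        have hdiag' : IsDiag n a (b - 1) := ⟨by omega, by omega, by omega, by omega⟩
        have hnotT : (a, b - 1) ∉ T := fun h => hnoA1 _ h (by omega)
        obtain ⟨q, hq, hcq⟩ := hmax _ hdiag' hnotT
        obtain ⟨x, y⟩ := q
        have hqd := hdiag _ hq
        simp only [IsDiag] at hqd
        rcases hcq with ⟨h1, h2, h3⟩ | ⟨h1, h2, h3⟩ <;> simp only at h1 h2 h3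
        · -- a < x, x < b-1, b-1 < y
          rcases Nat.lt_trichotomy y b with hy | hy | hy
          · omega
          · subst hy
            exact hnoA2 x hq h1
          · exact hnc _ hq _ hdT (by simp [Prod.ext_iff]; omega)
              (Or.inr ⟨by omega, by omega, by omega⟩)
        · -- x < a, a < y, y < b - 1 : crosses (a,b)
          exact hnc _ hq _ hdT (by simp [Prod.ext_iff]; omega)
            (Or.inl ⟨by omega, by omega, by omega⟩)
      exact ⟨a, b, a + 1, hdT, ha, by omega, by omega, H2, H3, Or.inr rfl, Or.inr (by omega)⟩

lemma flip_step (n : ℕ) (T : Finset (ℕ × ℕ)) (hT : IsTriangulation n T)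
    (hne : (T.filter (fun p => p.1 ≠ 0)).Nonempty) :
    ∃ T', Flip n T T' ∧
      (T'.filter (fun p => p.1 ≠ 0)).card + 1 = (T.filter (fun p => p.1 ≠ 0)).card := by
  obtain ⟨a, b, c, hd, ha, hac, hcb, H2, H3, H4, H5⟩ := find_config n T hT hne
  obtain ⟨hflip, hnotmem⟩ := flip_core n a b c T hT hd ha hac hcb H2 H3 H4 H5
  refine ⟨_, hflip, ?_⟩
  have hmemf : (a, b) ∈ T.filter (fun p => p.1 ≠ 0) :=
    Finset.mem_filter.mpr ⟨hd, by simp; omega⟩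
  have hpos : 1 ≤ (T.filter (fun p => p.1 ≠ 0)).card := Finset.card_pos.mpr ⟨_, hmemf⟩
  have heq : (insert (0, c) (T.erase (a, b))).filter (fun p => p.1 ≠ 0) =
      (T.filter (fun p => p.1 ≠ 0)).erase (a, b) := by
    ext p
    simp only [Finset.mem_filter, Finset.mem_insert, Finset.mem_erase]
    constructor
    · rintro ⟨rfl | hp, hp0⟩
      · simp at hp0
      · exact ⟨hp.1, hp.2, hp0⟩
    · rintro ⟨hne', hpT, hp0⟩
      exact ⟨Or.inr ⟨hne', hpT⟩, hp0⟩
  rw [heq, Finset.card_erase_of_mem hmemf]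
  omega

lemma zero_eq (n : ℕ) (T T₂ : Finset (ℕ × ℕ)) (hT : IsTriangulation n T)
    (hT₂ : IsTriangulation n T₂) (h : ∀ p ∈ T, p.1 = 0) (h₂ : ∀ p ∈ T₂, p.1 = 0) :
    T = T₂ := by
  have key : ∀ S S' : Finset (ℕ × ℕ), IsTriangulation n S → IsTriangulation n S' →
      (∀ p ∈ S, p.1 = 0) → (∀ p ∈ S', p.1 = 0) → S ⊆ S' := by
    intro S S' hS hS' hz hz'
    intro p hp
    by_contra hnp
    obtain ⟨q, hq, hcq⟩ := hS'.2.2 p (hS.1 p hp) hnp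
    have hp0 : p.1 = 0 := hz p hp
    have hq0 : q.1 = 0 := hz' q hq
    rcases hcq with ⟨h1, _, _⟩ | ⟨h1, _, _⟩ <;> omega
  exact Finset.Subset.antisymm (key T T₂ hT hT₂ h h₂) (key T₂ T hT₂ hT h₂ h)

lemma toFan (n : ℕ) : ∀ k (T : Finset (ℕ × ℕ)), IsTriangulation n T →
    (T.filter (fun p => p.1 ≠ 0)).card = k →
    ∃ T₀, IsTriangulation n T₀ ∧ (∀ p ∈ T₀, p.1 = 0) ∧ FlipSeq n k T T₀ := by
  intro k
  induction k with
  | zero =>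
    intro T hT h0
    refine ⟨T, hT, ?_, fun _ => T, rfl, rfl, fun i hi => absurd hi (by omega)⟩
    intro p hp
    by_contra hne
    have : p ∈ T.filter (fun p => p.1 ≠ 0) := Finset.mem_filter.mpr ⟨hp, hne⟩
    have := Finset.card_pos.mpr ⟨p, this⟩
    omega
  | succ k ih =>
    intro T hT hk
    have hne : (T.filter (fun p => p.1 ≠ 0)).Nonempty := Finset.card_pos.mp (by omega)
    obtain ⟨T', hflip, hcard⟩ := flip_step n T hT hne
    obtain ⟨T₀, hT₀, hz, s, hs0, hsk, hstep⟩ := ih T' hflip.2.1 (by omega)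
    refine ⟨T₀, hT₀, hz, fun i => if i = 0 then T else s (i - 1), by simp, by simp [hsk], ?_⟩
    intro i hi
    rcases Nat.eq_zero_or_pos i with rfl | hp
    · simpa [hs0] using hflip
    · have h1 : i ≠ 0 := by omega
      have h2 : i + 1 ≠ 0 := by omega
      simp only [h1, h2, if_false]
      have h3 : i - 1 + 1 = i := by omega
      have h4 : i + 1 - 1 = i := by omega
      rw [h4, ← h3]
      exact hstep (i - 1) (by omega)

lemma flip_symm {n : ℕ} {T T' : Finset (ℕ × ℕ)} (h : Flip n T T') : Flip n T' T := by
  obtain ⟨h1, h2, d, d', hd, hd', heq⟩ := h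
  refine ⟨h2, h1, d', d, ?_, ?_, ?_⟩
  · rw [heq]; exact Finset.mem_insert_self _ _
  · rw [heq]
    intro hmem
    rcases Finset.mem_insert.mp hmem with h | h
    · exact hd' (h ▸ hd)
    · exact Finset.notMem_erase _ _ h
  · rw [heq, Finset.erase_insert (by simp [hd']), Finset.insert_erase hd]

lemma flipseq_symm {n k : ℕ} {T T' : Finset (ℕ × ℕ)} (h : FlipSeq n k T T') :
    FlipSeq n k T' T := by
  obtain ⟨s, h0, hk, hstep⟩ := h
  refine ⟨fun i => s (k - i), by simp [hk], by simp [h0], ?_⟩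
  intro i hi
  show Flip n (s (k - i)) (s (k - (i + 1)))
  have h1 : k - i = (k - (i + 1)) + 1 := by omega
  rw [h1]
  exact flip_symm (hstep (k - (i + 1)) (by omega))

lemma flipseq_trans {n k₁ k₂ : ℕ} {T₁ T₂ T₃ : Finset (ℕ × ℕ)}
    (h1 : FlipSeq n k₁ T₁ T₂) (h2 : FlipSeq n k₂ T₂ T₃) :
    FlipSeq n (k₁ + k₂) T₁ T₃ := by
  obtain ⟨s, hs0, hsk, hss⟩ := h1
  obtain ⟨t, ht0, htk, hts⟩ := h2
  refine ⟨fun i => if i < k₁ then s i else t (i - k₁), ?_, ?_, ?_⟩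
  · show (if 0 < k₁ then s 0 else t (0 - k₁)) = T₁
    by_cases h : 0 < k₁
    · rw [if_pos h]; exact hs0
    · rw [if_neg h]
      have h0 : k₁ = 0 := by omega
      rw [show 0 - k₁ = 0 by omega, ht0, ← hsk, h0, hs0]
  · show (if k₁ + k₂ < k₁ then s (k₁ + k₂) else t (k₁ + k₂ - k₁)) = T₃
    rw [if_neg (by omega), show k₁ + k₂ - k₁ = k₂ by omega, htk]
  · intro i hi
    by_cases h : i + 1 < k₁
    · have h' : i < k₁ := by omega
      simp only [h, h', if_true]
      exact hss i (by omega)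
    · by_cases h' : i < k₁
      · have he : i + 1 = k₁ := by omega
        simp only [h, h', if_true, if_false]
        rw [show i + 1 - k₁ = 0 by omega, ht0, ← hsk, ← he]
        exact hss i (by omega)
      · have h'' : ¬ (i + 1 < k₁) := by omega
        simp only [h', h'', if_false]
        rw [show i + 1 - k₁ = (i - k₁) + 1 by omega]
        exact hts (i - k₁) (by omega)

/-- Any two triangulations of a convex polygon with `n ≥ 3` vertices can be
connected by a sequence of at most `2n - 6` flips. -/
theorem flip_distance_le (n : ℕ) (hn : 3 ≤ n) (T₁ T₂ : Finset (ℕ × ℕ))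
    (h₁ : IsTriangulation n T₁) (h₂ : IsTriangulation n T₂) :
    ∃ k ≤ 2 * n - 6, FlipSeq n k T₁ T₂ := by
  have c₁ := tri_card_le n hn T₁ h₁
  have c₂ := tri_card_le n hn T₂ h₂
  obtain ⟨F₁, hF₁, hz₁, hseq₁⟩ := toFan n _ T₁ h₁ rfl
  obtain ⟨F₂, hF₂, hz₂, hseq₂⟩ := toFan n _ T₂ h₂ rfl
  have hFF : F₁ = F₂ := zero_eq n F₁ F₂ hF₁ hF₂ hz₁ hz₂
  refine ⟨_, ?_, flipseq_trans hseq₁ (hFF ▸ flipseq_symm hseq₂)⟩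
  have m₁ := Finset.card_filter_le T₁ (fun p => p.1 ≠ 0)
  have m₂ := Finset.card_filter_le T₂ (fun p => p.1 ≠ 0)
  omega
end

section
/- In the edge-labeled flip graph of the convex pentagon with labeled diagonals, the closed walk of five flips around the pentagon's flip 5-cycle returns to the same unlabeled triangulation with the two diagonal labels transposed; hence the edge-labeled flip graph of the convex pentagon is connected and has exactly 10 vertices. -/
open scoped Classical

theorem LFlipSeq.reflTransGen {k : ℕ} {X Y : LT5} (h : LFlipSeq k X Y) :
    Relation.ReflTransGen LFlip X Y := by
  obtain ⟨s, rfl, rfl, hs⟩ := h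
  induction k with
  | zero => exact .refl
  | succ k ih => exact (ih fun i hi => hs i (by omega)).tail (hs k k.lt_succ_self)

theorem LT5.ext {X Y : LT5} (hT : X.T = Y.T) (hpos : X.pos = Y.pos) : X = Y := by
  cases X; cases Y; congr

def pentagonDiag : Fin 5 → ℕ × ℕ
  | 0 => (0, 2) | 1 => (0, 3) | 2 => (1, 3) | 3 => (1, 4) | 4 => (2, 4)

theorem pentagonDiag_injective : Function.Injective pentagonDiag := by decide

theorem isDiag_five_iff (p : ℕ × ℕ) :
    IsDiag 5 p.1 p.2 ↔ p ∈ Finset.univ.image pentagonDiag := by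
  obtain ⟨a, b⟩ := p
  rw [show Finset.univ.image pentagonDiag = {(0, 2), (0, 3), (1, 3), (1, 4), (2, 4)} by decide]
  simp only [IsDiag, Finset.mem_insert, Finset.mem_singleton, Prod.ext_iff]
  omega

theorem pentagonDiag_ne_succ (j : Fin 5) : pentagonDiag j ≠ pentagonDiag (j + 1) :=
  pentagonDiag_injective.ne (by simp)

def pentagonTri (j : Fin 5) : Finset (ℕ × ℕ) := {pentagonDiag j, pentagonDiag (j + 1)}

theorem pentagonTri_injective : Function.Injective pentagonTri := by decide

theorem isTriangulation_five_iff (T : Finset (ℕ × ℕ)) :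
    IsTriangulation 5 T ↔ ∃ j, T = pentagonTri j := by
  simp only [IsTriangulation, isDiag_five_iff]
  constructor
  · rintro ⟨hsub, hcross, hmax⟩
    have key : ∀ T ∈ (Finset.univ.image pentagonDiag).powerset,
        (∀ p ∈ T, ∀ q ∈ T, p ≠ q → ¬ Cross p q) →
        (∀ p ∈ Finset.univ.image pentagonDiag, p ∉ T → ∃ q ∈ T, Cross p q) →
        ∃ j, T = pentagonTri j := by decide
    exact key T (Finset.mem_powerset.2 hsub) hcross hmax
  · rintro ⟨j, rfl⟩
    fin_cases j <;> decide

def labeledTri (j : Fin 5) (c : Bool) : LT5 where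
  T := pentagonTri j
  pos b := if b = c then pentagonDiag j else pentagonDiag (j + 1)
  tri := (isTriangulation_five_iff _).2 ⟨j, rfl⟩
  mem b := by split_ifs <;> simp [pentagonTri]
  inj := by cases c <;> simp [pentagonDiag_ne_succ, (pentagonDiag_ne_succ j).symm]

theorem labeledTri_injective : Function.Injective (Function.uncurry labeledTri) := by
  rintro ⟨j, c⟩ ⟨j', c'⟩ h
  obtain rfl : j = j' := pentagonTri_injective (congrArg LT5.T h)
  have hc := congrFun (congrArg LT5.pos h) c
  by_cases hcc : c = c'
  · rw [hcc]
  · exact absurd (by simpa [labeledTri, hcc] using hc) (pentagonDiag_ne_succ j)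

theorem LT5.exists_eq_labeledTri (X : LT5) : ∃ j c, labeledTri j c = X := by
  obtain ⟨j, hj⟩ := (isTriangulation_five_iff X.T).1 X.tri
  have hmem (b : Bool) : X.pos b = pentagonDiag j ∨ X.pos b = pentagonDiag (j + 1) := by
    simpa [hj, pentagonTri] using X.mem b
  rcases hmem true with ht | ht
  · have hf : X.pos false = pentagonDiag (j + 1) :=
      (hmem false).resolve_left fun h => X.inj (ht.trans h.symm)
    refine ⟨j, true, LT5.ext hj.symm (funext fun b => ?_)⟩
    cases b <;> simp [labeledTri, ht, hf]
  · have hf : X.pos false = pentagonDiag j :=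
      (hmem false).resolve_right fun h => X.inj (ht.trans h.symm)
    refine ⟨j, false, LT5.ext hj.symm (funext fun b => ?_)⟩
    cases b <;> simp [labeledTri, ht, hf]

theorem lFlip_labeledTri_succ (j : Fin 5) (c : Bool) :
    LFlip (labeledTri j c) (labeledTri (j + 1) (!c)) := by
  refine ⟨pentagonDiag j, pentagonDiag (j + 2), by simp [labeledTri, pentagonTri], ?_, ?_, ?_⟩
  · show pentagonDiag (j + 2) ∉ pentagonTri j
    fin_cases j <;> decide
  · show pentagonTri (j + 1) =
      insert (pentagonDiag (j + 2)) ((pentagonTri j).erase (pentagonDiag j))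
    fin_cases j <;> decide
  · have htwo : j + 1 + 1 = j + 2 := by rw [add_assoc]; rfl
    intro b
    cases b <;> cases c <;> simp [labeledTri, (pentagonDiag_ne_succ j).symm, htwo]

open scoped Fin.NatCast

def flipWalk (j : Fin 5) (c : Bool) (i : ℕ) : LT5 :=
  labeledTri (j + (i : Fin 5)) (c ^^ i.bodd)

theorem lFlipSeq_flipWalk (j : Fin 5) (c : Bool) (k : ℕ) :
    LFlipSeq k (labeledTri j c) (flipWalk j c k) := by
  refine ⟨flipWalk j c, by simp [flipWalk], rfl, fun i _ => ?_⟩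
  simpa [flipWalk, add_assoc] using lFlip_labeledTri_succ (j + (i : Fin 5)) (c ^^ i.bodd)

theorem flipWalk_five (j : Fin 5) (c : Bool) : flipWalk j c 5 = labeledTri j (!c) := by
  simp [flipWalk]

theorem exists_flipWalk_eq (j j' : Fin 5) (c c' : Bool) :
    ∃ i, flipWalk j c i = labeledTri j' c' := by
  have hcrt : ∀ j j' : Fin 5, ∀ c c' : Bool,
      ∃ i : ℕ, i < 10 ∧ j + (i : Fin 5) = j' ∧ (c ^^ i.bodd) = c' := by
    decide
  obtain ⟨i, -, hj, hc⟩ := hcrt j j' c c'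
  exact ⟨i, by rw [flipWalk, hj, hc]⟩

/-- The closed walk of five flips around the pentagon's flip 5-cycle returns to the
same unlabeled triangulation with the two diagonal labels transposed; the edge-labeled
flip graph of the convex pentagon is connected and has exactly 10 vertices. -/
theorem pentagon_labeled_flipGraph :
    (∀ X : LT5, ∃ Y : LT5, LFlipSeq 5 X Y ∧ Y.T = X.T ∧ ∀ b, Y.pos b = X.pos (!b)) ∧
    (∀ X Y : LT5, Relation.ReflTransGen LFlip X Y) ∧
    Nat.card LT5 = 10 := by
  refine ⟨fun X => ?_, fun X Y => ?_, ?_⟩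
  · obtain ⟨j, c, rfl⟩ := X.exists_eq_labeledTri
    refine ⟨labeledTri j (!c), flipWalk_five j c ▸ lFlipSeq_flipWalk j c 5, rfl, fun b => ?_⟩
    cases b <;> cases c <;> rfl
  · obtain ⟨j, c, rfl⟩ := X.exists_eq_labeledTri
    obtain ⟨j', c', rfl⟩ := Y.exists_eq_labeledTri
    obtain ⟨i, hi⟩ := exists_flipWalk_eq j j' c c'
    exact hi ▸ (lFlipSeq_flipWalk j c i).reflTransGen
  · have hsurj : Function.Surjective (Function.uncurry labeledTri) := fun X =>
      let ⟨j, c, h⟩ := X.exists_eq_labeledTri; ⟨(j, c), h⟩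
    rw [← Nat.card_eq_of_bijective _ ⟨labeledTri_injective, hsurj⟩]
    simp
end

section
/- In a triangulation of a double chain with n points on each chain and no points in the flip-kernel, flipping an edge between an upper-chain point and a lower-chain point does not change the left-to-right order in which a line separating the two chains crosses the upper-lower edges, except for replacing the flipped edge by an edge occupying the same position in that order. -/
open scoped Classical

/-- Points of the plane. -/
abbrev Pt := ℝ × ℝ

/-- `S` is in general position: no three points are collinear. -/
def GenPos (S : Finset Pt) : Prop :=
  ∀ a ∈ S, ∀ b ∈ S, ∀ c ∈ S, a ≠ b → a ≠ c → b ≠ c →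
    ¬ Collinear ℝ ({a, b, c} : Set Pt)

/-- `e` is an edge of the point set `S` (a segment spanned by two points of `S`). -/
def SpannedBy (S : Finset Pt) (e : Pt × Pt) : Prop :=
  e.1 ∈ S ∧ e.2 ∈ S ∧ e.1 ≠ e.2

/-- Two segments cross: their relative interiors intersect. -/
def Crosses (e f : Pt × Pt) : Prop :=
  (openSegment ℝ e.1 e.2 ∩ openSegment ℝ f.1 f.2).Nonempty

/-- The convex quadrilateral spanned by the endpoints of `e` and `f` contains no
point of `S` besides those endpoints. -/
def EmptyQuad (S : Finset Pt) (e f : Pt × Pt) : Prop :=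
  ∀ p ∈ S, p ∈ convexHull ℝ ({e.1, e.2, f.1, f.2} : Set Pt) →
    p = e.1 ∨ p = e.2 ∨ p = f.1 ∨ p = f.2

/-- Adjacency in the quadrilateral graph of `S`: two spanned segments that cross and
whose four endpoints form an empty convex quadrilateral. -/
def QAdj (S : Finset Pt) (e f : Pt × Pt) : Prop :=
  SpannedBy S e ∧ SpannedBy S f ∧ Crosses e f ∧ EmptyQuad S e f

/-- `e` and `f` represent the same segment. -/
def SameSeg (e f : Pt × Pt) : Prop :=
  segment ℝ e.1 e.2 = segment ℝ f.1 f.2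

/-- `T` is a triangulation of the point set `S`: a maximal non-crossing
straight-line graph on vertex set `S`. -/
def IsTriOf (S : Finset Pt) (T : Finset (Pt × Pt)) : Prop :=
  (∀ e ∈ T, SpannedBy S e) ∧
  (∀ e ∈ T, ∀ f ∈ T, ¬ SameSeg e f → ¬ Crosses e f) ∧
  (∀ g : Pt × Pt, SpannedBy S g → (∀ e ∈ T, ¬ SameSeg g e) → ∃ e ∈ T, Crosses g e)

/-- A flip in a triangulation of `S`: the edge `e` of `T` is removed and the new
edge `f` is inserted, both before and after being triangulations of `S`. -/
def PFlip (S : Finset Pt) (T T' : Finset (Pt × Pt)) (e f : Pt × Pt) : Prop :=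
  IsTriOf S T ∧ IsTriOf S T' ∧ e ∈ T ∧ (∀ g ∈ T, ¬ SameSeg f g) ∧
  T' = insert f (T.erase e)

/-- Four points are in non-convex position: one lies in the convex hull of the
other three. -/
def NonConvex4 (a b c x : Pt) : Prop :=
  a ∈ convexHull ℝ ({b, c, x} : Set Pt) ∨ b ∈ convexHull ℝ ({a, c, x} : Set Pt) ∨
  c ∈ convexHull ℝ ({a, b, x} : Set Pt) ∨ x ∈ convexHull ℝ ({a, b, c} : Set Pt)

/-- A double chain with `n` points `u 0, …, u (n-1)` on the upper chain and
`n` points `l 0, …, l (n-1)` on the lower chain: all `2n` points are distinct,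
every point of one chain sees every point of the other chain (the open segment
between them avoids the convex hulls of both chains), and any quadrilateral formed
by three points of one chain and one point of the other chain is non-convex. -/
structure DoubleChain (n : ℕ) where
  /-- the upper chain -/
  u : Fin n → Pt
  /-- the lower chain -/
  l : Fin n → Pt
  inj : Function.Injective (Sum.elim u l)
  sees : ∀ i j : Fin n,
    openSegment ℝ (u i) (l j) ∩
      (convexHull ℝ (Set.range u) ∪ convexHull ℝ (Set.range l)) = ∅
  nonconvexU : ∀ i j k : Fin n, ∀ m : Fin n, i ≠ j → i ≠ k → j ≠ k →
    NonConvex4 (u i) (u j) (u k) (l m)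
  nonconvexL : ∀ i j k : Fin n, ∀ m : Fin n, i ≠ j → i ≠ k → j ≠ k →
    NonConvex4 (l i) (l j) (l k) (u m)

/-- The point set of a double chain (no extra points). -/
noncomputable def DoubleChain.pts {n : ℕ} (D : DoubleChain n) : Finset Pt :=
  Finset.univ.image D.u ∪ Finset.univ.image D.l

/-- `e` is an edge between an upper-chain and a lower-chain point. -/
def DoubleChain.IsUL {n : ℕ} (D : DoubleChain n) (e : Pt × Pt) : Prop :=
  ∃ i j : Fin n, SameSeg e (D.u i, D.l j)

/-- The point where the segment `p q` crosses the line `{x | φ x = c}`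
(for `φ p ≠ φ q`); it is symmetric in `p` and `q`. -/
noncomputable def crossPt (φ : Pt →ₗ[ℝ] ℝ) (c : ℝ) (p q : Pt) : Pt :=
  ((φ p - c) / (φ p - φ q)) • q + ((c - φ q) / (φ p - φ q)) • p

/-- The position of the crossing of the segment `e` with the separating line
`{x | φ x = c}`, measured by the coordinate `ψ` along the line. -/
noncomputable def posOf (φ ψ : Pt →ₗ[ℝ] ℝ) (c : ℝ) (e : Pt × Pt) : ℝ :=
  ψ (crossPt φ c e.1 e.2)

/-!
The new edge `f` crosses `e`, since `T` is a maximal non-crossing graph, and as the open segment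
between two chains avoids the convex hull of either chain, `f` joins the two chains as well.
Let `e` and `f` cross at `z`, say above the line, and meet the line at `xe` and `xf`. An upper-lower
edge `g` of `T` crosses neither `e` nor `f`. If it met the line strictly between `xe` and `xf`, its
upper part could not leave the triangle `z xe xf` through the sides on `e` and `f`, so its upper
endpoint `r` would lie in that triangle. But then the segment from `r` to the upper endpoint of `e`,
which lies in the convex hull of the upper chain, leaves the triangle through `e` or `f`, at a point
of that hull: impossible.
-/

open Set AffineMap

section Segment

variable {E : Type*} [AddCommGroup E] [Module ℝ E]

lemma eq_or_eq_of_segment_eq {p q p' q' : E} (h : segment ℝ p q = segment ℝ p' q') :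
    p = p' ∨ p = q' := by
  have hp' : Wbtw ℝ p p' q := mem_segment_iff_wbtw.1 (h ▸ left_mem_segment ℝ p' q')
  have hq' : Wbtw ℝ p q' q := mem_segment_iff_wbtw.1 (h ▸ right_mem_segment ℝ p' q')
  have hp : Wbtw ℝ p' p q' := mem_segment_iff_wbtw.1 (h ▸ left_mem_segment ℝ p q)
  obtain ⟨s, ⟨hs, -⟩, rfl⟩ := hp'
  obtain ⟨t, ⟨ht, -⟩, rfl⟩ := hq'
  simp only [lineMap_apply] at hp ⊢
  rcases wbtw_or_wbtw_smul_vadd_of_nonneg p (q -ᵥ p) hs ht with h' | h'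
  · exact .inl ((wbtw_swap_left_iff ℝ _).1 ⟨h', hp⟩)
  · exact .inr ((wbtw_swap_left_iff ℝ _).1 ⟨h', hp.symm⟩)

lemma eq_and_eq_or_eq_and_eq_of_segment_eq {p q p' q' : E}
    (h : segment ℝ p q = segment ℝ p' q') : (p = p' ∧ q = q') ∨ (p = q' ∧ q = p') := by
  have := eq_or_eq_of_segment_eq h
  have := eq_or_eq_of_segment_eq ((segment_symm ℝ q p).trans h)
  have := eq_or_eq_of_segment_eq h.symm
  have := eq_or_eq_of_segment_eq ((segment_symm ℝ q' p').trans h.symm)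
  grind

lemma openSegment_subset_of_mem {p q x : E} (hx : x ∈ openSegment ℝ p q) :
    openSegment ℝ p x ⊆ openSegment ℝ p q := by
  obtain ⟨a, b, ha, hb, hab, rfl⟩ := hx
  rintro _ ⟨a', b', ha', hb', hab', rfl⟩
  refine ⟨a' + b' * a, b' * b, by positivity, by positivity,
    by linear_combination b' * hab + hab', ?_⟩
  module

lemma exists_neg_smul_of_mem_openSegment {p x z : E} (hz : z ∈ openSegment ℝ p x) :
    ∃ a : ℝ, a < 0 ∧ p - z = a • (x - z) := by
  obtain ⟨α, β, hα, hβ, hαβ, rfl⟩ := hz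
  refine ⟨-(β / α), neg_neg_of_pos (div_pos hβ hα), ?_⟩
  obtain rfl : β = 1 - α := by linarith
  rw [show x - (α • p + (1 - α) • x) = α • (x - p) by module, smul_smul, neg_mul,
    div_mul_cancel₀ _ hα.ne']
  module

lemma map_lineMap (φ : E →ₗ[ℝ] ℝ) (p q : E) (t : ℝ) :
    φ (lineMap p q t) = φ p + t * (φ q - φ p) := by
  simp only [lineMap_apply_module, map_add, map_smul, smul_eq_mul]
  ring

end Segment

lemma exists_mem_Ioc_min_lerp_eq_zero {a₀ b₀ a₁ b₁ : ℝ} (h₀ : 0 < min a₀ b₀)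
    (h₁ : min a₁ b₁ ≤ 0) :
    ∃ t ∈ Ioc (0 : ℝ) 1, min ((1 - t) * a₀ + t * a₁) ((1 - t) * b₀ + t * b₁) = 0 := by
  obtain ⟨t, ⟨ht0, ht1⟩, ht⟩ := intermediate_value_Icc' (zero_le_one' ℝ)
    (f := fun t => min ((1 - t) * a₀ + t * a₁) ((1 - t) * b₀ + t * b₁))
    (by fun_prop) ⟨by simpa using h₁, by simpa using h₀.le⟩
  refine ⟨t, ⟨ht0.lt_of_ne ?_, ht1⟩, ht⟩
  rintro rfl
  norm_num at ht
  exact h₀.ne' ht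

section Triangle

/-! Coordinates `(a, b)` of `w` with respect to the triangle `z xe xf` mean
`w - z = a • (xe - z) + b • (xf - z)`; the sides through `z` are where `min a b = 0`. -/

variable {E : Type*} [AddCommGroup E] [Module ℝ E] {z xe xf : E} {se sf : Set E}

lemma mem_union_of_coords (hse : Convex ℝ se) (hsf : Convex ℝ sf) (hzse : z ∈ se)
    (hxse : xe ∈ se) (hzsf : z ∈ sf) (hxsf : xf ∈ sf) {w : E} {a b : ℝ}
    (hw : w - z = a • (xe - z) + b • (xf - z)) (hmin : min a b = 0) (hab : a + b ≤ 1) :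
    w ∈ se ∪ sf := by
  obtain ⟨ha, hb⟩ := le_min_iff.1 hmin.ge
  rcases min_eq_iff.1 hmin with ⟨rfl, -⟩ | ⟨rfl, -⟩
  · right
    convert hsf.lineMap_mem hzsf hxsf ⟨hb, by linarith⟩ using 1
    rw [lineMap_apply_module']
    linear_combination (norm := module) hw
  · left
    convert hse.lineMap_mem hzse hxse ⟨ha, by linarith⟩ using 1
    rw [lineMap_apply_module']
    linear_combination (norm := module) hw

lemma exists_lineMap_mem_union_of_coords (hse : Convex ℝ se) (hsf : Convex ℝ sf)
    (hzse : z ∈ se) (hxse : xe ∈ se) (hzsf : z ∈ sf) (hxsf : xf ∈ sf) {x y : E}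
    {a₀ b₀ a₁ b₁ : ℝ} (hx : x - z = a₀ • (xe - z) + b₀ • (xf - z))
    (hy : y - z = a₁ • (xe - z) + b₁ • (xf - z)) (h₀ : 0 < min a₀ b₀) (h₁ : min a₁ b₁ ≤ 0)
    (hx₁ : a₀ + b₀ ≤ 1) (hy₁ : a₁ + b₁ ≤ 1) :
    ∃ t ∈ Ioc (0 : ℝ) 1, lineMap x y t ∈ se ∪ sf := by
  obtain ⟨t, ⟨ht0, ht1⟩, ht⟩ := exists_mem_Ioc_min_lerp_eq_zero h₀ h₁
  refine ⟨t, ⟨ht0, ht1⟩, mem_union_of_coords hse hsf hzse hxse hzsf hxsf ?_ ht ?_⟩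
  · rw [lineMap_apply_module]
    linear_combination (norm := module) (1 - t) • hx + t • hy
  · nlinarith

end Triangle

section CrossPt

variable (φ : Pt →ₗ[ℝ] ℝ) (c : ℝ)

lemma crossPt_comm (p q : Pt) : crossPt φ c p q = crossPt φ c q p := by
  rw [crossPt, crossPt, add_comm]
  congr 2 <;> rw [← neg_div_neg_eq, neg_sub, neg_sub]

lemma crossPt_neg (p q : Pt) : crossPt (-φ) (-c) p q = crossPt φ c p q := by
  simp only [crossPt, LinearMap.neg_apply, neg_sub_neg]
  congr 2 <;> rw [← neg_div_neg_eq, neg_sub, neg_sub]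

variable {φ c}

lemma crossPt_eq_lineMap {p q : Pt} (h : φ p ≠ φ q) :
    crossPt φ c p q = lineMap p q ((φ p - c) / (φ p - φ q)) := by
  have : φ p - φ q ≠ 0 := sub_ne_zero.2 h
  rw [crossPt, lineMap_apply_module, add_comm]
  congr 2
  field_simp
  ring

lemma map_crossPt {p q : Pt} (h : φ p ≠ φ q) : φ (crossPt φ c p q) = c := by
  have : φ p - φ q ≠ 0 := sub_ne_zero.2 h
  rw [crossPt_eq_lineMap h, map_lineMap]
  field_simp
  ring

section Straddling

variable {p q : Pt} (hp : c < φ p) (hq : φ q < c)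
include hp hq

lemma crossPt_mem_openSegment : crossPt φ c p q ∈ openSegment ℝ p q := by
  rw [crossPt_eq_lineMap (by linarith), openSegment_eq_image_lineMap]
  refine mem_image_of_mem _ ⟨div_pos (by linarith) (by linarith), ?_⟩
  rw [div_lt_one (by linarith)]
  linarith

lemma eq_crossPt_of_mem_openSegment {w : Pt} (hw : w ∈ openSegment ℝ p q) (hwc : φ w = c) :
    w = crossPt φ c p q := by
  rw [openSegment_eq_image_lineMap] at hw
  obtain ⟨t, -, rfl⟩ := hw
  rw [map_lineMap] at hwc
  rw [crossPt_eq_lineMap (by linarith)]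
  congr 1
  rw [eq_div_iff (by linarith)]
  linarith

lemma mem_openSegment_crossPt {z : Pt} (hz : z ∈ openSegment ℝ p q) (hzc : c < φ z) :
    z ∈ openSegment ℝ p (crossPt φ c p q) := by
  rw [openSegment_eq_image_lineMap] at hz ⊢
  obtain ⟨t, ⟨ht0, -⟩, rfl⟩ := hz
  set τ := (φ p - c) / (φ p - φ q)
  have hτ : 0 < τ := div_pos (by linarith) (by linarith)
  have htτ : t < τ := by
    rw [map_lineMap] at hzc
    rw [lt_div_iff₀ (by linarith)]
    linarith
  refine ⟨t / τ, ⟨by positivity, (div_lt_one hτ).2 htτ⟩, ?_⟩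
  rw [crossPt_eq_lineMap (by linarith), lineMap_lineMap_right, div_mul_cancel₀ _ hτ.ne']

end Straddling

lemma apply_crossPt_ne_of_disjoint {ψ : Pt →ₗ[ℝ] ℝ}
    (hψ : ∀ x y : Pt, φ x = φ y → ψ x = ψ y → x = y) {p q p' q' : Pt} (hp : c < φ p)
    (hq : φ q < c) (hp' : c < φ p') (hq' : φ q' < c)
    (h : Disjoint (openSegment ℝ p q) (openSegment ℝ p' q')) :
    ψ (crossPt φ c p q) ≠ ψ (crossPt φ c p' q') := fun hpos =>
  h.ne_of_mem (crossPt_mem_openSegment hp hq) (crossPt_mem_openSegment hp' hq')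
    (hψ _ _ (by rw [map_crossPt (by linarith), map_crossPt (by linarith)]) hpos)

end CrossPt

section Rays

variable {φ ψ : Pt →ₗ[ℝ] ℝ} {c : ℝ} {z xe xf : Pt}

lemma exists_coords (hxe : φ xe = c) (hxf : φ xf = c) (hzc : φ z ≠ c) (hψ : ψ xe ≠ ψ xf)
    (w : Pt) : ∃ a b : ℝ, w - z = a • (xe - z) + b • (xf - z) := by
  have hli : LinearIndependent ℝ ![xe - z, xf - z] := by
    refine LinearIndependent.pair_iff.2 fun s t hst => ?_
    have h₁ := congrArg φ hst
    have h₂ := congrArg ψ hst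
    simp only [map_add, map_smul, map_sub, smul_eq_mul, map_zero, hxe, hxf] at h₁ h₂
    have hst : s + t = 0 := by
      apply mul_right_cancel₀ (sub_ne_zero.2 (Ne.symm hzc))
      linear_combination h₁
    have hs : s = 0 := by
      apply mul_right_cancel₀ (sub_ne_zero.2 hψ)
      linear_combination h₂ - (ψ xf - ψ z) * hst
    exact ⟨hs, by linarith⟩
  have hw : w - z ∈ Submodule.span ℝ (range ![xe - z, xf - z]) := by
    rw [hli.span_eq_top_of_card_eq_finrank (by simp)]
    exact Submodule.mem_top
  rw [Matrix.range_cons_cons_empty, Submodule.mem_span_pair] at hw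
  obtain ⟨a, b, h⟩ := hw
  exact ⟨a, b, h.symm⟩

lemma map_sub_eq_of_coords (hxe : φ xe = c) (hxf : φ xf = c) {w : Pt} {a b : ℝ}
    (hw : w - z = a • (xe - z) + b • (xf - z)) : φ w - c = (1 - (a + b)) * (φ z - c) := by
  have h := congrArg φ hw
  simp only [map_add, map_smul, map_sub, smul_eq_mul, hxe, hxf] at h
  linear_combination h

theorem notMem_Ioo_of_crossing_rays {H se sf : Set Pt} (hH : Convex ℝ H)
    (hse : Convex ℝ se) (hsf : Convex ℝ sf) {xg pu ru : Pt}
    (hzse : z ∈ se) (hxse : xe ∈ se) (hzsf : z ∈ sf) (hxsf : xf ∈ sf)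
    (hxe : φ xe = c) (hxf : φ xf = c) (hxg : φ xg = c) (hzc : c < φ z) (hruc : c < φ ru)
    (hpu : pu ∈ H) (hru : ru ∈ H) (hzpu : z ∈ openSegment ℝ pu xe)
    (hHs : Disjoint H (se ∪ sf)) (hgs : Disjoint (openSegment ℝ xg ru) (se ∪ sf)) :
    ψ xg ∉ Ioo (ψ xe) (ψ xf) := by
  rintro ⟨h₁, h₂⟩
  have hψ : ψ xe ≠ ψ xf := (h₁.trans h₂).ne
  obtain ⟨ag, bg, hg⟩ := exists_coords hxe hxf hzc.ne' hψ xg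
  obtain ⟨ar, br, hr⟩ := exists_coords hxe hxf hzc.ne' hψ ru
  obtain ⟨ap, hap, hp⟩ := exists_neg_smul_of_mem_openSegment hzpu
  have hg₁ : ag + bg = 1 := by
    have h := map_sub_eq_of_coords hxe hxf hg
    rw [hxg, sub_self, eq_comm, mul_eq_zero, sub_eq_zero] at h
    exact (h.resolve_right (sub_ne_zero.2 hzc.ne')).symm
  have hg₀ : 0 < min ag bg := by
    have h := congrArg ψ hg
    simp only [map_add, map_smul, map_sub, smul_eq_mul] at h
    have ha : ψ xf - ψ xg = ag * (ψ xf - ψ xe) := by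
      linear_combination -(ψ xf - ψ z) * hg₁ - h
    have hb : ψ xg - ψ xe = bg * (ψ xf - ψ xe) := by
      linear_combination h + (ψ xe - ψ z) * hg₁
    exact lt_min (pos_of_mul_pos_left (ha ▸ sub_pos.2 h₂) (sub_pos.2 (h₁.trans h₂)).le)
      (pos_of_mul_pos_left (hb ▸ sub_pos.2 h₁) (sub_pos.2 (h₁.trans h₂)).le)
  have hr₁ : ar + br ≤ 1 := by
    have := map_sub_eq_of_coords hxe hxf hr
    nlinarith
  -- `g` enters the triangle `z xe xf` at `xg` and cannot leave it through `e` or `f`.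
  have hr₀ : 0 < min ar br := by
    by_contra! hr₀
    obtain ⟨t, ⟨ht₀, ht₁⟩, ht⟩ := exists_lineMap_mem_union_of_coords hse hsf hzse hxse hzsf
      hxsf hg hr hg₀ hr₀ hg₁.le hr₁
    rcases ht₁.lt_or_eq with ht₁ | rfl
    · refine hgs.notMem_of_mem_left ?_ ht
      rw [openSegment_eq_image_lineMap]
      exact ⟨t, ⟨ht₀, ht₁⟩, rfl⟩
    · exact hHs.notMem_of_mem_left hru (by rwa [lineMap_apply_one] at ht)
  -- The segment from `ru` to `pu` lies in `H` and leaves the triangle through `e` or `f`.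
  obtain ⟨t, ⟨ht₀, ht₁⟩, ht⟩ := exists_lineMap_mem_union_of_coords (y := pu) (b₁ := 0) hse hsf
    hzse hxse hzsf hxsf hr (by simpa using hp) hr₀ ((min_le_left _ _).trans hap.le) hr₁
    (by linarith)
  exact hHs.notMem_of_mem_left (hH.lineMap_mem hru hpu ⟨ht₀.le, ht₁⟩) ht

theorem crossPt_notMem_Ioo_of_disjoint {H : Set Pt} (hH : Convex ℝ H)
    {pu pl qu ql ru rl : Pt} (hpu : pu ∈ H) (hru : ru ∈ H)
    (hpuc : c < φ pu) (hplc : φ pl < c) (hquc : c < φ qu) (hqlc : φ ql < c) (hruc : c < φ ru)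
    (hrlc : φ rl < c) (hze : z ∈ openSegment ℝ pu pl) (hzf : z ∈ openSegment ℝ qu ql)
    (hzc : c < φ z) (hHs : Disjoint H (openSegment ℝ pu pl ∪ openSegment ℝ qu ql))
    (hgs : Disjoint (openSegment ℝ ru rl) (openSegment ℝ pu pl ∪ openSegment ℝ qu ql)) :
    ψ (crossPt φ c ru rl) ∉ Ioo (ψ (crossPt φ c pu pl)) (ψ (crossPt φ c qu ql)) :=
  notMem_Ioo_of_crossing_rays hH (convex_openSegment _ _) (convex_openSegment _ _) hze
    (crossPt_mem_openSegment hpuc hplc) hzf (crossPt_mem_openSegment hquc hqlc)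
    (map_crossPt (by linarith)) (map_crossPt (by linarith)) (map_crossPt (by linarith)) hzc hruc
    hpu hru (mem_openSegment_crossPt hpuc hplc hze hzc) hHs
    (hgs.mono_left ((openSegment_symm ℝ _ _).trans_subset
      (openSegment_subset_of_mem (crossPt_mem_openSegment hruc hrlc))))

end Rays

lemma SameSeg.openSegment_eq {e e' : Pt × Pt} (h : SameSeg e e') :
    openSegment ℝ e.1 e.2 = openSegment ℝ e'.1 e'.2 := by
  rcases eq_and_eq_or_eq_and_eq_of_segment_eq h with ⟨h₁, h₂⟩ | ⟨h₁, h₂⟩ <;> rw [h₁, h₂]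
  exact openSegment_symm ℝ _ _

lemma SameSeg.posOf_eq {φ ψ : Pt →ₗ[ℝ] ℝ} {c : ℝ} {e e' : Pt × Pt} (h : SameSeg e e') :
    posOf φ ψ c e = posOf φ ψ c e' := by
  rcases eq_and_eq_or_eq_and_eq_of_segment_eq h with ⟨h₁, h₂⟩ | ⟨h₁, h₂⟩ <;>
    rw [posOf, posOf, h₁, h₂]
  rw [crossPt_comm]

lemma not_crosses_iff_disjoint {e f : Pt × Pt} :
    ¬ Crosses e f ↔ Disjoint (openSegment ℝ e.1 e.2) (openSegment ℝ f.1 f.2) := by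
  rw [Crosses, ← not_disjoint_iff_nonempty_inter, not_not]

lemma Crosses.symm {e f : Pt × Pt} (h : Crosses e f) : Crosses f e := by
  rwa [Crosses, inter_comm]

namespace PFlip

variable {S : Finset Pt} {T T' : Finset (Pt × Pt)} {e f g : Pt × Pt}

lemma mem_new (h : PFlip S T T' e f) : f ∈ T' := by
  rw [h.2.2.2.2]
  exact Finset.mem_insert_self _ _

lemma mem_of_ne (h : PFlip S T T' e f) (hg : g ∈ T) (hge : g ≠ e) : g ∈ T' := by
  rw [h.2.2.2.2]
  exact Finset.mem_insert_of_mem (Finset.mem_erase.2 ⟨hge, hg⟩)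

lemma not_crosses_new (h : PFlip S T T' e f) (hg : g ∈ T) (hge : g ≠ e) : ¬ Crosses g f :=
  h.2.1.2.1 g (h.mem_of_ne hg hge) f h.mem_new fun hgf => h.2.2.2.1 g hg hgf.symm

lemma crosses (h : PFlip S T T' e f) : Crosses f e := by
  obtain ⟨g, hg, hfg⟩ := h.1.2.2 f (h.2.1.1 f h.mem_new) h.2.2.2.1
  by_cases hge : g = e
  · exact hge ▸ hfg
  · exact absurd hfg.symm (h.not_crosses_new hg hge)

lemma not_crosses_old (h : PFlip S T T' e f) (hg : g ∈ T) (hge : g ≠ e) : ¬ Crosses g e :=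
  h.1.2.1 g hg e h.2.2.1 fun hge' => h.not_crosses_new hg hge <| by
    rw [Crosses, hge'.openSegment_eq]
    exact h.crosses.symm

end PFlip

namespace DoubleChain

variable {n : ℕ} (D : DoubleChain n)

lemma disjoint_convexHull_upper (i j : Fin n) :
    Disjoint (convexHull ℝ (range D.u)) (openSegment ℝ (D.u i) (D.l j)) := by
  rw [disjoint_comm, disjoint_iff_inter_eq_empty]
  exact subset_eq_empty (inter_subset_inter_right _ subset_union_left) (D.sees i j)

lemma disjoint_convexHull_lower (i j : Fin n) :
    Disjoint (convexHull ℝ (range D.l)) (openSegment ℝ (D.u i) (D.l j)) := by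
  rw [disjoint_comm, disjoint_iff_inter_eq_empty]
  exact subset_eq_empty (inter_subset_inter_right _ subset_union_right) (D.sees i j)

lemma mem_pts {x : Pt} (hx : x ∈ D.pts) : (∃ i, D.u i = x) ∨ ∃ j, D.l j = x := by
  simpa [pts] using hx

variable {D}

lemma isUL_of_crosses {e f : Pt × Pt} (he : D.IsUL e) (hf : SpannedBy D.pts f)
    (hfe : Crosses f e) : D.IsUL f := by
  obtain ⟨a, b, he⟩ := he
  obtain ⟨z, hzf, hze⟩ := hfe
  rw [he.openSegment_eq] at hze
  rcases D.mem_pts hf.1 with ⟨i, hi⟩ | ⟨j, hj⟩ <;>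
    rcases D.mem_pts hf.2.1 with ⟨i', hi'⟩ | ⟨j', hj'⟩
  · refine absurd hze ((D.disjoint_convexHull_upper a b).notMem_of_mem_left ?_)
    rw [← hi, ← hi'] at hzf
    exact (convex_convexHull ℝ _).openSegment_subset (subset_convexHull ℝ _ (mem_range_self i))
      (subset_convexHull ℝ _ (mem_range_self i')) hzf
  · exact ⟨i, j', by rw [SameSeg, ← hi, ← hj']⟩
  · exact ⟨i', j, by rw [SameSeg, ← hj, ← hi', segment_symm]⟩
  · refine absurd hze ((D.disjoint_convexHull_lower a b).notMem_of_mem_left ?_)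
    rw [← hj, ← hj'] at hzf
    exact (convex_convexHull ℝ _).openSegment_subset (subset_convexHull ℝ _ (mem_range_self j))
      (subset_convexHull ℝ _ (mem_range_self j')) hzf

variable {φ ψ : Pt →ₗ[ℝ] ℝ} {c : ℝ}

theorem crossPt_notMem_Ioo (hsep : (∀ i, c < φ (D.u i)) ∧ ∀ j, φ (D.l j) < c)
    {a b i j k m : Fin n} {z : Pt} (hzE : z ∈ openSegment ℝ (D.u a) (D.l b))
    (hzF : z ∈ openSegment ℝ (D.u i) (D.l j))
    (hG : Disjoint (openSegment ℝ (D.u k) (D.l m))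
      (openSegment ℝ (D.u a) (D.l b) ∪ openSegment ℝ (D.u i) (D.l j))) :
    ψ (crossPt φ c (D.u k) (D.l m)) ∉
      Ioo (ψ (crossPt φ c (D.u a) (D.l b))) (ψ (crossPt φ c (D.u i) (D.l j))) := by
  obtain ⟨hu, hl⟩ := hsep
  rcases lt_trichotomy c (φ z) with hz | hz | hz
  · exact crossPt_notMem_Ioo_of_disjoint (convex_convexHull ℝ _)
      (subset_convexHull ℝ _ (mem_range_self a)) (subset_convexHull ℝ _ (mem_range_self k))
      (hu a) (hl b) (hu i) (hl j) (hu k) (hl m) hzE hzF hz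
      (disjoint_union_right.2 ⟨D.disjoint_convexHull_upper a b, D.disjoint_convexHull_upper i j⟩)
      hG
  · rw [← eq_crossPt_of_mem_openSegment (hu a) (hl b) hzE hz.symm,
      ← eq_crossPt_of_mem_openSegment (hu i) (hl j) hzF hz.symm, Ioo_self]
    exact notMem_empty _
  · -- Below the line, reflect it: the lower chain takes the role of the upper one.
    simp only [openSegment_symm ℝ (D.u _)] at hzE hzF hG
    have := crossPt_notMem_Ioo_of_disjoint (φ := -φ) (c := -c) (ψ := ψ) (convex_convexHull ℝ _)
      (subset_convexHull ℝ _ (mem_range_self b)) (subset_convexHull ℝ _ (mem_range_self m))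
      (by simpa using hl b) (by simpa using hu a) (by simpa using hl j) (by simpa using hu i)
      (by simpa using hl m) (by simpa using hu k) hzE hzF (by simpa using hz)
      (by simpa only [openSegment_symm ℝ (D.u _)] using
        disjoint_union_right.2 ⟨D.disjoint_convexHull_lower a b, D.disjoint_convexHull_lower i j⟩)
      hG
    simpa only [crossPt_neg, crossPt_comm φ c (D.l _)] using this

theorem crossPt_lt_iff (hsep : (∀ i, c < φ (D.u i)) ∧ ∀ j, φ (D.l j) < c)
    (hψ : ∀ x y : Pt, φ x = φ y → ψ x = ψ y → x = y)
    {a b i j k m : Fin n} {z : Pt} (hzE : z ∈ openSegment ℝ (D.u a) (D.l b))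
    (hzF : z ∈ openSegment ℝ (D.u i) (D.l j))
    (hG : Disjoint (openSegment ℝ (D.u k) (D.l m))
      (openSegment ℝ (D.u a) (D.l b) ∪ openSegment ℝ (D.u i) (D.l j))) :
    ψ (crossPt φ c (D.u a) (D.l b)) < ψ (crossPt φ c (D.u k) (D.l m)) ↔
      ψ (crossPt φ c (D.u i) (D.l j)) < ψ (crossPt φ c (D.u k) (D.l m)) := by
  obtain ⟨hu, hl⟩ := hsep
  have hGE := apply_crossPt_ne_of_disjoint hψ (hu k) (hl m) (hu a) (hl b)
    (disjoint_union_right.1 hG).1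
  have hGF := apply_crossPt_ne_of_disjoint hψ (hu k) (hl m) (hu i) (hl j)
    (disjoint_union_right.1 hG).2
  have hEF := crossPt_notMem_Ioo (ψ := ψ) ⟨hu, hl⟩ hzE hzF hG
  have hFE := crossPt_notMem_Ioo (ψ := ψ) ⟨hu, hl⟩ hzF hzE (union_comm _ _ ▸ hG)
  simp only [mem_Ioo, not_and, not_lt] at hEF hFE
  exact ⟨fun h => (hEF h).lt_of_ne hGF.symm, fun h => (hFE h).lt_of_ne hGE.symm⟩

end DoubleChain

/-- In a triangulation of a double chain (with no points in the flip-kernel), flipping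
an upper-lower edge `e` inserts again an upper-lower edge `f`, and the left-to-right
order in which a separating line crosses the upper-lower edges is unchanged, except
that `f` occupies the position previously occupied by `e`. Here `φ, c` describe a
separating line `{x | φ x = c}` (upper points above, lower points below) and `ψ` is a
coordinate along it. -/
theorem double_chain_flip_preserves_crossing_order
    (n : ℕ) (D : DoubleChain n)
    (φ ψ : Pt →ₗ[ℝ] ℝ) (c : ℝ)
    (hsep : (∀ i, c < φ (D.u i)) ∧ ∀ j, φ (D.l j) < c)
    (hψ : ∀ x y : Pt, φ x = φ y → ψ x = ψ y → x = y)
    (T T' : Finset (Pt × Pt)) (e f : Pt × Pt)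
    (hflip : PFlip D.pts T T' e f)
    (heUL : D.IsUL e) :
    D.IsUL f ∧
    ∀ g ∈ T, g ≠ e → D.IsUL g →
      (posOf φ ψ c e < posOf φ ψ c g ↔ posOf φ ψ c f < posOf φ ψ c g) := by
  have hfUL := DoubleChain.isUL_of_crosses heUL (hflip.2.1.1 f hflip.mem_new) hflip.crosses
  refine ⟨hfUL, fun g hg hge ⟨k, m, hG⟩ => ?_⟩
  obtain ⟨a, b, hE⟩ := heUL
  obtain ⟨i, j, hF⟩ := hfUL
  obtain ⟨z, hzF, hzE⟩ := hflip.crosses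
  have hGEF : Disjoint (openSegment ℝ (D.u k) (D.l m))
      (openSegment ℝ (D.u a) (D.l b) ∪ openSegment ℝ (D.u i) (D.l j)) := by
    rw [← hG.openSegment_eq, ← hE.openSegment_eq, ← hF.openSegment_eq, disjoint_union_right,
      ← not_crosses_iff_disjoint, ← not_crosses_iff_disjoint]
    exact ⟨hflip.not_crosses_old hg hge, hflip.not_crosses_new hg hge⟩
  rw [hE.posOf_eq, hF.posOf_eq, hG.posOf_eq]
  exact DoubleChain.crossPt_lt_iff hsep hψ (hE.openSegment_eq ▸ hzE) (hF.openSegment_eq ▸ hzF)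
    hGEF
end
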